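/- arXiv:2506.09360 — 11 statements merged into one kernel-verified Lean document; each statement's English description precedes it below -/
import Mathlib

section
/- Assume c > m₁/b₁ and r₀ > (cb₁ − m₁)(1 − β)/(b₂c). Then u* > 0 and v* > 0, and (u*, v*) is the unique pair of positive real numbers (u, v) satisfying the steady-state equations u(r₀ − a·u) − b₁(1 − β)u·v/(b₂v + (1 − β)u) = 0 and −m₁v + c·b₁(1 − β)u·v/(b₂v + (1 − β)u) = 0. -/
/-! The second equation says that the predation term `b₁(1 - β)uv/(b₂v + (1 - β)u)` equals
`m₁v/c`, which is linear in `v` after clearing the denominator and forces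
`v = (cb₁ - m₁)(1 - β)u/(b₂m₁)`. Substituting this into the first equation leaves
`u(r₀ - au) = (cb₁ - m₁)(1 - β)u/(b₂c)`, whose only positive root is `u*`. -/

lemma predation_eq_div_iff {b₁ b₂ c m₁ γ u v : ℝ} (hb₂ : 0 < b₂) (hc : c ≠ 0) (hm₁ : m₁ ≠ 0)
    (hγ : 0 < γ) (hu : 0 < u) (hv : 0 < v) :
    b₁ * γ * u * v / (b₂ * v + γ * u) = m₁ * v / c ↔
      v = (c * b₁ - m₁) * γ * u / (b₂ * m₁) := by
  have hD : b₂ * v + γ * u ≠ 0 := by positivity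
  have hfactor : b₁ * γ * u * v * c - m₁ * v * (b₂ * v + γ * u) =
      v * ((c * b₁ - m₁) * γ * u - v * (b₂ * m₁)) := by ring
  rw [div_eq_div_iff hD hc, eq_div_iff (mul_ne_zero hb₂.ne' hm₁), ← sub_eq_zero, hfactor,
    mul_eq_zero, or_iff_right hv.ne', sub_eq_zero, eq_comm]

lemma mul_sub_mul_eq_mul_iff {a r k u : ℝ} (ha : a ≠ 0) (hu : u ≠ 0) :
    u * (r - a * u) = u * k ↔ u = 1 / a * (r - k) := by
  rw [mul_right_inj' hu]
  constructor <;> intro h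
  · field_simp; linarith
  · rw [h]; field_simp; ring

theorem equilibrium_iff {a b₁ b₂ c m₁ r₀ γ u v : ℝ} (ha : a ≠ 0) (hb₂ : 0 < b₂) (hc : c ≠ 0)
    (hm₁ : m₁ ≠ 0) (hγ : 0 < γ) (hu : 0 < u) (hv : 0 < v) :
    (u * (r₀ - a * u) - b₁ * γ * u * v / (b₂ * v + γ * u) = 0 ∧
        -(m₁ * v) + c * b₁ * γ * u * v / (b₂ * v + γ * u) = 0) ↔
      (u = 1 / a * (r₀ - (c * b₁ - m₁) * γ / (b₂ * c)) ∧
        v = (c * b₁ - m₁) * γ * u / (b₂ * m₁)) := by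
  have hfactor_c : c * b₁ * γ * u * v / (b₂ * v + γ * u) =
      c * (b₁ * γ * u * v / (b₂ * v + γ * u)) := by ring
  have hsecond : -(m₁ * v) + c * (b₁ * γ * u * v / (b₂ * v + γ * u)) = 0 ↔
      b₁ * γ * u * v / (b₂ * v + γ * u) = m₁ * v / c := by
    rw [neg_add_eq_zero, eq_div_iff hc, eq_comm, mul_comm c]
  rw [hfactor_c, hsecond, predation_eq_div_iff hb₂ hc hm₁ hγ hu hv, sub_eq_zero]
  refine and_congr_left fun hV => ?_
  have hmv : m₁ * v / c = u * ((c * b₁ - m₁) * γ / (b₂ * c)) := by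
    rw [hV]; field_simp
  rw [(predation_eq_div_iff hb₂ hc hm₁ hγ hu hv).mpr hV, hmv,
    mul_sub_mul_eq_mul_iff ha hu.ne']

theorem stmt0_general
    (a b₁ b₂ c m₁ r₀ β : ℝ)
    (ha : 0 < a) (hb₁ : 0 < b₁) (hb₂ : 0 < b₂) (hm₁ : 0 < m₁)
    (hβ1 : β < 1)
    (ustar vstar : ℝ)
    (hustar : ustar = (1 / a) * (r₀ - (c * b₁ - m₁) * (1 - β) / (b₂ * c)))
    (hvstar : vstar = (c * b₁ - m₁) * (1 - β) * ustar / (b₂ * m₁))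
    (hc : c > m₁ / b₁)
    (hr : r₀ > (c * b₁ - m₁) * (1 - β) / (b₂ * c)) :
    0 < ustar ∧ 0 < vstar ∧
      ∀ u v : ℝ, 0 < u → 0 < v →
        ((u * (r₀ - a * u) - b₁ * (1 - β) * u * v / (b₂ * v + (1 - β) * u) = 0 ∧
          -(m₁ * v) + c * b₁ * (1 - β) * u * v / (b₂ * v + (1 - β) * u) = 0)
        ↔ (u = ustar ∧ v = vstar)) := by
  have hγ : 0 < 1 - β := sub_pos.mpr hβ1
  have hc0 : 0 < c := (div_pos hm₁ hb₁).trans hc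
  have hcb : 0 < c * b₁ - m₁ := sub_pos.mpr ((div_lt_iff₀ hb₁).mp hc)
  have hus : 0 < ustar := by
    rw [hustar]
    have := sub_pos.mpr hr
    positivity
  refine ⟨hus, by rw [hvstar]; positivity, fun u v hu hv => ?_⟩
  rw [equilibrium_iff ha.ne' hb₂ hc0.ne' hm₁.ne' hγ hu hv, ← hustar, hvstar]
  exact and_congr_right fun hue => by rw [hue]

/-- Under `c > m₁/b₁` and `r₀ > (cb₁ − m₁)(1 − β)/(b₂c)`, the quantities
`u* = (1/a)(r₀ − (cb₁ − m₁)(1 − β)/(b₂c))` and `v* = (cb₁ − m₁)(1 − β)u*/(b₂m₁)` are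
positive, and `(u*, v*)` is the unique pair of positive reals solving the
steady-state equations. -/
theorem stmt0
    (a b₁ b₂ c m₁ r₀ β : ℝ)
    (ha : 0 < a) (hb₁ : 0 < b₁) (hb₂ : 0 < b₂) (hc0 : 0 < c) (hm₁ : 0 < m₁)
    (hr₀ : 0 < r₀) (hβ0 : 0 < β) (hβ1 : β < 1)
    (ustar vstar : ℝ)
    (hustar : ustar = (1 / a) * (r₀ - (c * b₁ - m₁) * (1 - β) / (b₂ * c)))
    (hvstar : vstar = (c * b₁ - m₁) * (1 - β) * ustar / (b₂ * m₁))
    (hc : c > m₁ / b₁)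
    (hr : r₀ > (c * b₁ - m₁) * (1 - β) / (b₂ * c)) :
    0 < ustar ∧ 0 < vstar ∧
      ∀ u v : ℝ, 0 < u → 0 < v →
        ((u * (r₀ - a * u) - b₁ * (1 - β) * u * v / (b₂ * v + (1 - β) * u) = 0 ∧
          -(m₁ * v) + c * b₁ * (1 - β) * u * v / (b₂ * v + (1 - β) * u) = 0)
        ↔ (u = ustar ∧ v = vstar)) :=
  stmt0_general a b₁ b₂ c m₁ r₀ β ha hb₁ hb₂ hm₁ hβ1 ustar vstar hustar hvstar hc hr
end

section
/- Assume c > m₁/b₁ and r₀ > r̲₀. Then (a·u* − (1 − β)ϖ) + c·b₂·ϖ > 0; consequently, for every n ∈ ℕ₀, every d_u > 0 and every ℓ, d_v > 0, TR_n(d_u) := −(n²/ℓ²)(d_u + d_v) − (a·u* − (1 − β)ϖ) − c·b₂·ϖ < 0. -/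
/-! With the explicit values of `u*` and `ϖ`, the quantity `(a·u* − (1 − β)ϖ) + c·b₂·ϖ` simplifies
to `r₀` minus the second term of the maximum defining `r̲₀`, so it is positive as soon as
`r₀ > r̲₀`. The diffusion part of `TR_n(d_u)` is nonpositive, hence `TR_n(d_u) < 0`. -/

lemma mul_ustar_sub_add_eq {a b₁ b₂ c m₁ r₀ β ϖ ustar : ℝ} (ha : a ≠ 0) (hb₁ : b₁ ≠ 0)
    (hb₂ : b₂ ≠ 0) (hc : c ≠ 0)
    (hϖ : ϖ = m₁ * (c * b₁ - m₁) / (c ^ 2 * b₁ * b₂))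
    (hustar : ustar = (1 / a) * (r₀ - (c * b₁ - m₁) * (1 - β) / (b₂ * c))) :
    (a * ustar - (1 - β) * ϖ) + c * b₂ * ϖ
      = r₀ - ((c * b₁ + m₁) * (1 - β) - c * b₂ * m₁) * (c * b₁ - m₁) / (c ^ 2 * b₁ * b₂) := by
  subst hϖ hustar
  field_simp
  ring

lemma neg_diffusion_sub_neg (n : ℕ) {ℓ du dv s : ℝ} (hdu : 0 ≤ du) (hdv : 0 ≤ dv) (hs : 0 < s) :
    -((n : ℝ) ^ 2 / ℓ ^ 2) * (du + dv) - s < 0 := by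
  have : 0 ≤ ((n : ℝ) ^ 2 / ℓ ^ 2) * (du + dv) := by positivity
  linarith

theorem stmt2_general
    (a b₁ b₂ c m₁ r₀ β : ℝ)
    (ha : 0 < a) (hb₁ : 0 < b₁) (hb₂ : 0 < b₂) (hc0 : 0 < c)
    (ϖ ustar rlow : ℝ)
    (hϖ : ϖ = m₁ * (c * b₁ - m₁) / (c ^ 2 * b₁ * b₂))
    (hustar : ustar = (1 / a) * (r₀ - (c * b₁ - m₁) * (1 - β) / (b₂ * c)))
    (hrlow : rlow = max ((c * b₁ - m₁) * (1 - β) / (b₂ * c))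
        (((c * b₁ + m₁) * (1 - β) - c * b₂ * m₁) * (c * b₁ - m₁) / (c ^ 2 * b₁ * b₂)))
    (hr : r₀ > rlow) :
    (a * ustar - (1 - β) * ϖ) + c * b₂ * ϖ > 0 ∧
      ∀ (n : ℕ) (du ℓ dv : ℝ), 0 < du → 0 < ℓ → 0 < dv →
        -((n : ℝ) ^ 2 / ℓ ^ 2) * (du + dv) - (a * ustar - (1 - β) * ϖ) - c * b₂ * ϖ < 0 := by
  have hpos : (a * ustar - (1 - β) * ϖ) + c * b₂ * ϖ > 0 := by
    rw [mul_ustar_sub_add_eq ha.ne' hb₁.ne' hb₂.ne' hc0.ne' hϖ hustar]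
    rw [hrlow, gt_iff_lt, max_lt_iff] at hr
    linarith [hr.2]
  refine ⟨hpos, fun n du ℓ dv hdu _ hdv => ?_⟩
  rw [sub_sub]
  exact neg_diffusion_sub_neg n hdu.le hdv.le hpos

/-- Under `c > m₁/b₁` and `r₀ > r̲₀`, one has
`(a·u* − (1 − β)ϖ) + c·b₂·ϖ > 0`, and consequently `TR_n(d_u) < 0` for every
`n ∈ ℕ₀`, every `d_u > 0` and every `ℓ, d_v > 0`. -/
theorem stmt2
    (a b₁ b₂ c m₁ r₀ β : ℝ)
    (ha : 0 < a) (hb₁ : 0 < b₁) (hb₂ : 0 < b₂) (hc0 : 0 < c) (hm₁ : 0 < m₁)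
    (hr₀ : 0 < r₀) (hβ0 : 0 < β) (hβ1 : β < 1)
    (ϖ ustar rlow : ℝ)
    (hϖ : ϖ = m₁ * (c * b₁ - m₁) / (c ^ 2 * b₁ * b₂))
    (hustar : ustar = (1 / a) * (r₀ - (c * b₁ - m₁) * (1 - β) / (b₂ * c)))
    (hrlow : rlow = max ((c * b₁ - m₁) * (1 - β) / (b₂ * c))
        (((c * b₁ + m₁) * (1 - β) - c * b₂ * m₁) * (c * b₁ - m₁) / (c ^ 2 * b₁ * b₂)))
    (hc : c > m₁ / b₁) (hr : r₀ > rlow) :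
    (a * ustar - (1 - β) * ϖ) + c * b₂ * ϖ > 0 ∧
      ∀ (n : ℕ) (du ℓ dv : ℝ), 0 < du → 0 < ℓ → 0 < dv →
        -((n : ℝ) ^ 2 / ℓ ^ 2) * (du + dv) - (a * ustar - (1 - β) * ϖ) - c * b₂ * ϖ < 0 :=
  stmt2_general a b₁ b₂ c m₁ r₀ β ha hb₁ hb₂ hc0 ϖ ustar rlow hϖ hustar hrlow hr
end

section
/- (Theorem 3.5(1)) Assume c > m₁/b₁ and r₀ ≥ r̄₀. Then for every n ∈ ℕ₀ and all d_u, α > 0: DET_n(d_u, α) > 0 and TR_n(d_u) < 0; consequently every complex root λ of the quadratic λ² − TR_n(d_u)·λ + DET_n(d_u, α) = 0 has strictly negative real part. -/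
/-!
The threshold `r̄₀` is exactly the value of `r₀` at which `a u* = (1 - β) ϖ`, so `r₀ ≥ r̄₀` makes
the only coefficient of `DET_n` and `TR_n` that could have the wrong sign harmless, while
`c b₁ > m₁` makes `ϖ`, `u*` and `v*` positive. A real quadratic `λ² - T λ + D` with `T < 0 < D`
has only roots with negative real part: a non-real root has real part `T / 2`, and a real root
`x ≥ 0` would give `x² - T x + D > 0`.
-/

theorem Complex.re_neg_of_sq_sub_mul_add_eq_zero {T D : ℝ} (hT : T < 0) (hD : 0 < D) {z : ℂ}
    (hz : z ^ 2 - T * z + D = 0) : z.re < 0 := by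
  have hre := congrArg Complex.re hz
  have him := congrArg Complex.im hz
  simp only [sq, Complex.add_re, Complex.sub_re, Complex.mul_re, Complex.ofReal_re,
    Complex.ofReal_im, Complex.add_im, Complex.sub_im, Complex.mul_im, Complex.zero_re,
    Complex.zero_im] at hre him
  have him' : z.im * (2 * z.re - T) = 0 := by linarith
  rcases mul_eq_zero.mp him' with him0 | hcrit
  · rw [him0] at hre
    by_contra! hx
    nlinarith [mul_nonneg (neg_nonneg.2 hT.le) hx]
  · linarith

lemma mul_uStar_sub_eq_sub_rBar {a b₁ b₂ c m₁ r₀ β : ℝ}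
    (ha : a ≠ 0) (hb₁ : b₁ ≠ 0) (hb₂ : b₂ ≠ 0) (hc : c ≠ 0) :
    a * ((1 / a) * (r₀ - (c * b₁ - m₁) * (1 - β) / (b₂ * c)))
        - (1 - β) * (m₁ * (c * b₁ - m₁) / (c ^ 2 * b₁ * b₂))
      = r₀ - (c * b₁ - m₁) * (c * b₁ + m₁) * (1 - β) / (c ^ 2 * b₁ * b₂) := by
  field_simp
  ring

theorem stmt4_general
    (a b₁ b₂ c m₁ r₀ d_v ℓ β : ℝ)
    (ha : 0 < a) (hb₁ : 0 < b₁) (hb₂ : 0 < b₂) (hc0 : 0 < c) (hm₁ : 0 < m₁)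
    (hdv : 0 < d_v) (hβ1 : β < 1)
    (ϖ ustar vstar rbar : ℝ)
    (hϖ : ϖ = m₁ * (c * b₁ - m₁) / (c ^ 2 * b₁ * b₂))
    (hustar : ustar = (1 / a) * (r₀ - (c * b₁ - m₁) * (1 - β) / (b₂ * c)))
    (hvstar : vstar = (c * b₁ - m₁) * (1 - β) * ustar / (b₂ * m₁))
    (hrbar : rbar = (c * b₁ - m₁) * (c * b₁ + m₁) * (1 - β) / (c ^ 2 * b₁ * b₂))
    (DET : ℕ → ℝ → ℝ → ℝ)
    (hDET : ∀ (n : ℕ) (du α : ℝ), DET n du α =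
      ((n : ℝ) ^ 4 / ℓ ^ 4) * du * d_v +
        ((n : ℝ) ^ 2 / ℓ ^ 2) * (d_v * (a * ustar - (1 - β) * ϖ) + du * c * b₂ * ϖ
          + α * c * b₂ * vstar * ϖ) + a * c * b₂ * ustar * ϖ)
    (TR : ℕ → ℝ → ℝ)
    (hTR : ∀ (n : ℕ) (du : ℝ), TR n du =
      -((n : ℝ) ^ 2 / ℓ ^ 2) * (du + d_v) - (a * ustar - (1 - β) * ϖ) - c * b₂ * ϖ)
    (hc : c > m₁ / b₁) (hr : r₀ ≥ rbar) :
    ∀ (n : ℕ) (du α : ℝ), 0 < du → 0 < α →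
      DET n du α > 0 ∧ TR n du < 0 ∧
        ∀ lam : ℂ, lam ^ 2 - (TR n du : ℂ) * lam + (DET n du α : ℂ) = 0 → lam.re < 0 := by
  have hcb : 0 < c * b₁ - m₁ := by linarith [(div_lt_iff₀ hb₁).mp hc]
  have hβ : 0 < 1 - β := by linarith
  have hϖ_pos : 0 < ϖ := by rw [hϖ]; positivity
  have hgap : 0 ≤ a * ustar - (1 - β) * ϖ := by
    rw [hϖ, hustar, mul_uStar_sub_eq_sub_rBar ha.ne' hb₁.ne' hb₂.ne' hc0.ne', ← hrbar]
    linarith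
  have hustar_pos : 0 < ustar := pos_of_mul_pos_right (by nlinarith) ha.le
  have hvstar_pos : 0 < vstar := by rw [hvstar]; positivity
  intro n du α hdu hα
  have hDET_pos : 0 < DET n du α := by
    rw [hDET]
    generalize a * ustar - (1 - β) * ϖ = s at hgap
    positivity
  have hTR_neg : TR n du < 0 := by
    rw [hTR]
    have hdiff : 0 ≤ ((n : ℝ) ^ 2 / ℓ ^ 2) * (du + d_v) := by positivity
    have hcross : 0 < c * b₂ * ϖ := by positivity
    linarith
  exact ⟨hDET_pos, hTR_neg, fun _ => Complex.re_neg_of_sq_sub_mul_add_eq_zero hTR_neg hDET_pos⟩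

/-- Theorem 3.5(1): Under `c > m₁/b₁` and `r₀ ≥ r̄₀`, for every
`n ∈ ℕ₀` and all `d_u, α > 0` one has `DET_n(d_u, α) > 0` and `TR_n(d_u) < 0`, and
every complex root of `λ² − TR_n(d_u)·λ + DET_n(d_u, α) = 0` has strictly negative
real part. -/
theorem stmt4
    (a b₁ b₂ c m₁ r₀ d_v ℓ β : ℝ)
    (ha : 0 < a) (hb₁ : 0 < b₁) (hb₂ : 0 < b₂) (hc0 : 0 < c) (hm₁ : 0 < m₁)
    (hr₀ : 0 < r₀) (hdv : 0 < d_v) (hℓ : 0 < ℓ) (hβ0 : 0 < β) (hβ1 : β < 1)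
    (ϖ ustar vstar rbar : ℝ)
    (hϖ : ϖ = m₁ * (c * b₁ - m₁) / (c ^ 2 * b₁ * b₂))
    (hustar : ustar = (1 / a) * (r₀ - (c * b₁ - m₁) * (1 - β) / (b₂ * c)))
    (hvstar : vstar = (c * b₁ - m₁) * (1 - β) * ustar / (b₂ * m₁))
    (hrbar : rbar = (c * b₁ - m₁) * (c * b₁ + m₁) * (1 - β) / (c ^ 2 * b₁ * b₂))
    (DET : ℕ → ℝ → ℝ → ℝ)
    (hDET : ∀ (n : ℕ) (du α : ℝ), DET n du α =
      ((n : ℝ) ^ 4 / ℓ ^ 4) * du * d_v +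
        ((n : ℝ) ^ 2 / ℓ ^ 2) * (d_v * (a * ustar - (1 - β) * ϖ) + du * c * b₂ * ϖ
          + α * c * b₂ * vstar * ϖ) + a * c * b₂ * ustar * ϖ)
    (TR : ℕ → ℝ → ℝ)
    (hTR : ∀ (n : ℕ) (du : ℝ), TR n du =
      -((n : ℝ) ^ 2 / ℓ ^ 2) * (du + d_v) - (a * ustar - (1 - β) * ϖ) - c * b₂ * ϖ)
    (hc : c > m₁ / b₁) (hr : r₀ ≥ rbar) :
    ∀ (n : ℕ) (du α : ℝ), 0 < du → 0 < α →
      DET n du α > 0 ∧ TR n du < 0 ∧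
        ∀ lam : ℂ, lam ^ 2 - (TR n du : ℂ) * lam + (DET n du α : ℂ) = 0 → lam.re < 0 :=
  stmt4_general a b₁ b₂ c m₁ r₀ d_v ℓ β ha hb₁ hb₂ hc0 hm₁ hdv hβ1 ϖ ustar vstar rbar hϖ hustar
    hvstar hrbar DET hDET TR hTR hc hr
end

section
/- Assume c > m₁/b₁ and r̲₀ < r₀ < r̄₀. Define Γ(x) := −(d_v(a u* − (1 − β)ϖ)x + a c b₂ u* ϖ)/(x(d_v x + c b₂ ϖ)) for x > 0 and x* := c b₂ ϖ(a u* + √(a u*(1 − β)ϖ))/(d_v((1 − β)ϖ − a u*)). Then x* > 0, Γ is strictly increasing on the interval (0, x*] and strictly decreasing on [x*, ∞); moreover, for every n ∈ ℕ, d_u^n = Γ(n²/ℓ²). -/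
/-! Put `K = c b₂ ϖ`, `p = d_v((1 - β)ϖ - a u*)`, `q = a u* K` (all positive by the bounds on
`r₀`) and `w = K √(a u* (1 - β) ϖ)`. Then `Γ x = (p x - q) / (x (d_v x + K))`, `x* = (q + w) / p`
and `d_v w² = d_v q² + p q K`. This relation makes the difference quotient factor as
`Γ y - Γ x = d_v (y - x) (w² - u v) / (p · x(d_v x + K) · y(d_v y + K))` with `u = p x - q`,
`v = p y - q`. As `p x* - q = w`, for `x < y` we get `-w < u < v ≤ w` on `(0, x*]`, so `u v < w²`,
and `w ≤ u < v` on `[x*, ∞)`, so `u v > w²`. -/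

lemma mul_lt_sq_of_neg_lt_of_lt_of_le {u v w : ℝ} (hu : -w < u) (huv : u < v) (hv : v ≤ w) :
    u * v < w ^ 2 := by
  nlinarith

lemma sq_lt_mul_of_le_of_lt {u v w : ℝ} (hw : 0 < w) (hu : w ≤ u) (huv : u < v) :
    w ^ 2 < u * v := by
  nlinarith [mul_le_mul_of_nonneg_right hu hw.le, mul_lt_mul_of_pos_left huv (hw.trans_le hu)]

noncomputable def rationalProfile (d K p q x : ℝ) : ℝ := (p * x - q) / (x * (d * x + K))

section RationalProfile

variable {d K p q w : ℝ}

lemma rationalProfile_sub (hd : 0 < d) (hK : 0 < K) (hp : p ≠ 0)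
    (hw : d * w ^ 2 = d * q ^ 2 + p * q * K) {x y : ℝ} (hx : 0 < x) (hy : 0 < y) :
    rationalProfile d K p q y - rationalProfile d K p q x =
      d * (y - x) * (w ^ 2 - (p * x - q) * (p * y - q)) /
        (p * (x * (d * x + K)) * (y * (d * y + K))) := by
  have hDx : x * (d * x + K) ≠ 0 := by positivity
  have hDy : y * (d * y + K) ≠ 0 := by positivity
  rw [rationalProfile, rationalProfile, div_sub_div _ _ hDy hDx,
    div_eq_div_iff (mul_ne_zero hDy hDx) (by positivity)]
  linear_combination -(y - x) * (x * (d * x + K)) * (y * (d * y + K)) * hw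

lemma strictMonoOn_rationalProfile (hd : 0 < d) (hK : 0 < K) (hp : 0 < p) (hq : 0 ≤ q)
    (hw0 : 0 ≤ w) (hw : d * w ^ 2 = d * q ^ 2 + p * q * K) :
    StrictMonoOn (rationalProfile d K p q) (Set.Ioc 0 ((q + w) / p)) := by
  have hqw : q ≤ w := (sq_le_sq₀ hq hw0).1 (by nlinarith [mul_nonneg (mul_nonneg hp.le hq) hK.le])
  rintro x ⟨hx, -⟩ y ⟨hy, hyx⟩ hxy
  rw [← sub_pos]
  rw [rationalProfile_sub hd hK hp.ne' hw hx hy]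
  have hv : p * y - q ≤ w := by
    rw [le_div_iff₀ hp] at hyx
    linarith
  have huv : (p * x - q) * (p * y - q) < w ^ 2 := mul_lt_sq_of_neg_lt_of_lt_of_le
    (by nlinarith) (by nlinarith) hv
  have hD : 0 < p * (x * (d * x + K)) * (y * (d * y + K)) := by positivity
  exact div_pos (mul_pos (mul_pos hd (sub_pos.2 hxy)) (sub_pos.2 huv)) hD

lemma strictAntiOn_rationalProfile (hd : 0 < d) (hK : 0 < K) (hp : 0 < p) (hq : 0 ≤ q)
    (hw0 : 0 < w) (hw : d * w ^ 2 = d * q ^ 2 + p * q * K) :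
    StrictAntiOn (rationalProfile d K p q) (Set.Ici ((q + w) / p)) := by
  intro x hx y _ hxy
  rw [Set.mem_Ici, div_le_iff₀ hp] at hx
  have hx0 : 0 < x := pos_of_mul_pos_left (by linarith) hp.le
  have hy0 : 0 < y := hx0.trans hxy
  rw [← sub_neg]
  rw [rationalProfile_sub hd hK hp.ne' hw hx0 hy0]
  have huv : w ^ 2 < (p * x - q) * (p * y - q) :=
    sq_lt_mul_of_le_of_lt hw0 (by linarith) (by nlinarith)
  have hD : 0 < p * (x * (d * x + K)) * (y * (d * y + K)) := by positivity
  exact div_neg_of_neg_of_pos (mul_neg_of_pos_of_neg (mul_pos hd (sub_pos.2 hxy))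
    (sub_neg.2 huv)) hD

end RationalProfile

theorem stmt6_general
    (a b₁ b₂ c m₁ r₀ d_v ℓ β : ℝ)
    (ha : 0 < a) (hb₁ : 0 < b₁) (hb₂ : 0 < b₂) (hc0 : 0 < c) (hm₁ : 0 < m₁)
    (hdv : 0 < d_v)
    (ϖ ustar rlow rbar xstar : ℝ)
    (hϖ : ϖ = m₁ * (c * b₁ - m₁) / (c ^ 2 * b₁ * b₂))
    (hustar : ustar = (1 / a) * (r₀ - (c * b₁ - m₁) * (1 - β) / (b₂ * c)))
    (hrlow : rlow = max ((c * b₁ - m₁) * (1 - β) / (b₂ * c))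
        (((c * b₁ + m₁) * (1 - β) - c * b₂ * m₁) * (c * b₁ - m₁) / (c ^ 2 * b₁ * b₂)))
    (hrbar : rbar = (c * b₁ - m₁) * (c * b₁ + m₁) * (1 - β) / (c ^ 2 * b₁ * b₂))
    (hxstar : xstar = c * b₂ * ϖ * (a * ustar + Real.sqrt (a * ustar * (1 - β) * ϖ))
        / (d_v * ((1 - β) * ϖ - a * ustar)))
    (Γ : ℝ → ℝ)
    (hΓ : ∀ x : ℝ, Γ x = -(d_v * (a * ustar - (1 - β) * ϖ) * x + a * c * b₂ * ustar * ϖ)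
        / (x * (d_v * x + c * b₂ * ϖ)))
    (dun : ℕ → ℝ)
    (hdun : ∀ n : ℕ, dun n =
      -(d_v * (a * ustar - (1 - β) * ϖ) * ((n : ℝ) ^ 2 / ℓ ^ 2) + a * c * b₂ * ustar * ϖ)
        / (((n : ℝ) ^ 2 / ℓ ^ 2) * (d_v * (n : ℝ) ^ 2 / ℓ ^ 2 + c * b₂ * ϖ)))
    (hc : c > m₁ / b₁) (hr1 : rlow < r₀) (hr2 : r₀ < rbar) :
    0 < xstar ∧ StrictMonoOn Γ (Set.Ioc 0 xstar) ∧ StrictAntiOn Γ (Set.Ici xstar) ∧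
      ∀ n : ℕ, 0 < n → dun n = Γ ((n : ℝ) ^ 2 / ℓ ^ 2) := by
  have hcb : 0 < c * b₁ - m₁ := sub_pos.2 ((div_lt_iff₀ hb₁).mp hc)
  have hϖ0 : 0 < ϖ := hϖ ▸ by positivity
  have hA_eq : a * ustar = r₀ - (c * b₁ - m₁) * (1 - β) / (b₂ * c) := by
    rw [hustar]; field_simp
  have hA : 0 < a * ustar := by
    linarith [hrlow ▸ le_max_left ((c * b₁ - m₁) * (1 - β) / (b₂ * c)) _]
  have hgap : (1 - β) * ϖ - a * ustar = rbar - r₀ := by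
    rw [hϖ, hA_eq, hrbar]; field_simp; ring
  have hB : 0 < (1 - β) * ϖ := by linarith
  have hAB : 0 < a * ustar * (1 - β) * ϖ := by
    rw [mul_assoc (a * ustar)]; exact mul_pos hA hB
  set K := c * b₂ * ϖ
  set p := d_v * ((1 - β) * ϖ - a * ustar) with hp
  set q := a * ustar * K with hq
  set w := K * √(a * ustar * (1 - β) * ϖ) with hw
  have hwq : d_v * w ^ 2 = d_v * q ^ 2 + p * q * K := by
    rw [hw, mul_pow, Real.sq_sqrt hAB.le]; ring
  have hx : xstar = (q + w) / p := by rw [hxstar]; ring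
  have hΓ' : Γ = rationalProfile d_v K p q := by
    funext x; rw [hΓ, rationalProfile, hp, hq]; ring
  have hK0 : 0 < K := by positivity
  have hp0 : 0 < p := mul_pos hdv (by linarith)
  have hq0 : 0 ≤ q := (mul_pos hA hK0).le
  have hw0 : 0 < w := mul_pos hK0 (Real.sqrt_pos.2 hAB)
  refine ⟨hx ▸ by positivity,
    hΓ' ▸ hx ▸ strictMonoOn_rationalProfile hdv hK0 hp0 hq0 hw0.le hwq,
    hΓ' ▸ hx ▸ strictAntiOn_rationalProfile hdv hK0 hp0 hq0 hw0 hwq, fun n _ => ?_⟩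
  rw [hdun, hΓ]
  ring_nf

/-- Under `c > m₁/b₁` and `r̲₀ < r₀ < r̄₀`, with
`Γ(x) = −(d_v(a u* − (1 − β)ϖ)x + a c b₂ u* ϖ)/(x(d_v x + c b₂ ϖ))` and
`x* = c b₂ ϖ(a u* + √(a u*(1 − β)ϖ))/(d_v((1 − β)ϖ − a u*))`, one has `x* > 0`,
`Γ` strictly increasing on `(0, x*]` and strictly decreasing on `[x*, ∞)`, and
`d_u^n = Γ(n²/ℓ²)` for every `n ∈ ℕ`. -/
theorem stmt6
    (a b₁ b₂ c m₁ r₀ d_v ℓ β : ℝ)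
    (ha : 0 < a) (hb₁ : 0 < b₁) (hb₂ : 0 < b₂) (hc0 : 0 < c) (hm₁ : 0 < m₁)
    (hr₀ : 0 < r₀) (hdv : 0 < d_v) (hℓ : 0 < ℓ) (hβ0 : 0 < β) (hβ1 : β < 1)
    (ϖ ustar rlow rbar xstar : ℝ)
    (hϖ : ϖ = m₁ * (c * b₁ - m₁) / (c ^ 2 * b₁ * b₂))
    (hustar : ustar = (1 / a) * (r₀ - (c * b₁ - m₁) * (1 - β) / (b₂ * c)))
    (hrlow : rlow = max ((c * b₁ - m₁) * (1 - β) / (b₂ * c))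
        (((c * b₁ + m₁) * (1 - β) - c * b₂ * m₁) * (c * b₁ - m₁) / (c ^ 2 * b₁ * b₂)))
    (hrbar : rbar = (c * b₁ - m₁) * (c * b₁ + m₁) * (1 - β) / (c ^ 2 * b₁ * b₂))
    (hxstar : xstar = c * b₂ * ϖ * (a * ustar + Real.sqrt (a * ustar * (1 - β) * ϖ))
        / (d_v * ((1 - β) * ϖ - a * ustar)))
    (Γ : ℝ → ℝ)
    (hΓ : ∀ x : ℝ, Γ x = -(d_v * (a * ustar - (1 - β) * ϖ) * x + a * c * b₂ * ustar * ϖ)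
        / (x * (d_v * x + c * b₂ * ϖ)))
    (dun : ℕ → ℝ)
    (hdun : ∀ n : ℕ, dun n =
      -(d_v * (a * ustar - (1 - β) * ϖ) * ((n : ℝ) ^ 2 / ℓ ^ 2) + a * c * b₂ * ustar * ϖ)
        / (((n : ℝ) ^ 2 / ℓ ^ 2) * (d_v * (n : ℝ) ^ 2 / ℓ ^ 2 + c * b₂ * ϖ)))
    (hc : c > m₁ / b₁) (hr1 : rlow < r₀) (hr2 : r₀ < rbar) :
    0 < xstar ∧ StrictMonoOn Γ (Set.Ioc 0 xstar) ∧ StrictAntiOn Γ (Set.Ici xstar) ∧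
      ∀ n : ℕ, 0 < n → dun n = Γ ((n : ℝ) ^ 2 / ℓ ^ 2) :=
  stmt6_general a b₁ b₂ c m₁ r₀ d_v ℓ β ha hb₁ hb₂ hc0 hm₁ hdv ϖ ustar rlow rbar xstar hϖ hustar
    hrlow hrbar hxstar Γ hΓ dun hdun hc hr1 hr2
end

section
/- Assume c > m₁/b₁ and r₀ > (cb₁ − m₁)(1 − β)/(b₂c). Then for every n ∈ ℕ and d_u > 0: α(n, d_u) > α(n+1, d_u) if and only if d_u > d_u^{n,n+1}, and α(n, d_u) = α(n+1, d_u) if and only if d_u = d_u^{n,n+1}; equivalently, the difference d_u ↦ α(n, d_u) − α(n+1, d_u) is strictly increasing in d_u and vanishes exactly at d_u^{n,n+1}. -/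
/-!
Dividing the numerator of `α(n, d_u)` by `n²` leaves a term proportional to `n² d_u d_v`, a term
independent of `n`, and the term `a c b₂ u* ϖ ℓ² / n²`. Hence `α(n, d_u) − α(n+1, d_u)` is affine
in `d_u` with slope `(2n+1) d_v / (ℓ² c b₂ v* ϖ)` and root `d_u^{n,n+1}`; the slope is positive
because the hypotheses on `c` and `r₀` make `ϖ`, `u*` and `v*` positive.
-/

lemma neg_div_sub_neg_div_succ_eq (A B C D E L N x : ℝ) (hL : L ≠ 0) (hB : B ≠ 0)
    (hD : D ≠ 0) (hN : N ≠ 0) (hN₁ : N + 1 ≠ 0) :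
    -(N ^ 4 / L ^ 4 * x * D + N ^ 2 / L ^ 2 * (E + x * C) + A) / (N ^ 2 / L ^ 2 * B)
      - -((N + 1) ^ 4 / L ^ 4 * x * D + (N + 1) ^ 2 / L ^ 2 * (E + x * C) + A)
          / ((N + 1) ^ 2 / L ^ 2 * B)
      = (2 * N + 1) * D / (L ^ 2 * B) * (x - A * L ^ 4 / (D * N ^ 2 * (N + 1) ^ 2)) := by
  field_simp
  ring

lemma StrictMono.of_eq_mul_sub {g : ℝ → ℝ} {K x₀ : ℝ} (hK : 0 < K)
    (hg : ∀ x, g x = K * (x - x₀)) : StrictMono g := fun x y hxy => by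
  rw [hg, hg]
  exact mul_lt_mul_of_pos_left (sub_lt_sub_right hxy x₀) hK

lemma pos_iff_of_eq_mul_sub {g : ℝ → ℝ} {K x₀ : ℝ} (hK : 0 < K)
    (hg : ∀ x, g x = K * (x - x₀)) (x : ℝ) : 0 < g x ↔ x₀ < x := by
  rw [hg, mul_pos_iff_of_pos_left hK, sub_pos]

lemma eq_zero_iff_of_eq_mul_sub {g : ℝ → ℝ} {K x₀ : ℝ} (hK : 0 < K)
    (hg : ∀ x, g x = K * (x - x₀)) (x : ℝ) : g x = 0 ↔ x = x₀ := by
  rw [hg, mul_eq_zero, sub_eq_zero, or_iff_right hK.ne']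

theorem stmt11_general
    (a b₁ b₂ c m₁ r₀ d_v ℓ β : ℝ)
    (ha : 0 < a) (hb₁ : 0 < b₁) (hb₂ : 0 < b₂) (hc0 : 0 < c) (hm₁ : 0 < m₁)
    (hdv : 0 < d_v) (hℓ : 0 < ℓ) (hβ1 : β < 1)
    (ϖ ustar vstar : ℝ)
    (hϖ : ϖ = m₁ * (c * b₁ - m₁) / (c ^ 2 * b₁ * b₂))
    (hustar : ustar = (1 / a) * (r₀ - (c * b₁ - m₁) * (1 - β) / (b₂ * c)))
    (hvstar : vstar = (c * b₁ - m₁) * (1 - β) * ustar / (b₂ * m₁))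
    (αf : ℕ → ℝ → ℝ)
    (hαf : ∀ (n : ℕ) (du : ℝ), αf n du =
      -(((n : ℝ) ^ 4 / ℓ ^ 4) * du * d_v +
          ((n : ℝ) ^ 2 / ℓ ^ 2) * (d_v * (a * ustar - (1 - β) * ϖ) + du * c * b₂ * ϖ)
          + a * c * b₂ * ustar * ϖ)
        / (((n : ℝ) ^ 2 / ℓ ^ 2) * c * b₂ * vstar * ϖ))
    (dunn : ℕ → ℝ)
    (hdunn : ∀ n : ℕ, dunn n =
      a * c * b₂ * ustar * ϖ * ℓ ^ 4 / (d_v * (n : ℝ) ^ 2 * ((n : ℝ) + 1) ^ 2))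
    (hc : c > m₁ / b₁) (hr : r₀ > (c * b₁ - m₁) * (1 - β) / (b₂ * c)) :
    ∀ n : ℕ, 0 < n →
      (∀ du : ℝ, 0 < du →
        (αf n du > αf (n + 1) du ↔ du > dunn n) ∧
        (αf n du = αf (n + 1) du ↔ du = dunn n)) ∧
      StrictMonoOn (fun du => αf n du - αf (n + 1) du) (Set.Ioi (0 : ℝ)) ∧
      (∀ du : ℝ, 0 < du → (αf n du - αf (n + 1) du = 0 ↔ du = dunn n)) := by
  intro n hn
  have hcb : 0 < c * b₁ - m₁ := sub_pos.2 ((div_lt_iff₀ hb₁).1 hc)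
  have hϖ₀ : 0 < ϖ := hϖ ▸ by positivity
  have hu : 0 < ustar := hustar ▸ mul_pos (one_div_pos.2 ha) (sub_pos.2 hr)
  have hv : 0 < vstar := hvstar ▸ by have := sub_pos.2 hβ1; positivity
  have hn₀ : (0 : ℝ) < n := Nat.cast_pos.2 hn
  have key : ∀ du, αf n du - αf (n + 1) du
      = (2 * n + 1) * d_v / (ℓ ^ 2 * (c * b₂ * vstar * ϖ)) * (du - dunn n) := fun du => by
    rw [hαf, hαf, hdunn]
    push_cast
    linear_combination neg_div_sub_neg_div_succ_eq (a * c * b₂ * ustar * ϖ)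
      (c * b₂ * vstar * ϖ) (c * b₂ * ϖ) d_v (d_v * (a * ustar - (1 - β) * ϖ)) ℓ n du
      hℓ.ne' (by positivity) hdv.ne' hn₀.ne' (by positivity)
  have hK : 0 < (2 * n + 1) * d_v / (ℓ ^ 2 * (c * b₂ * vstar * ϖ)) := by positivity
  refine ⟨fun du _ => ⟨?_, ?_⟩, (StrictMono.of_eq_mul_sub hK key).strictMonoOn _,
    fun du _ => eq_zero_iff_of_eq_mul_sub hK key du⟩
  · exact sub_pos.symm.trans (pos_iff_of_eq_mul_sub hK key du)
  · exact sub_eq_zero.symm.trans (eq_zero_iff_of_eq_mul_sub hK key du)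

/-- Under `c > m₁/b₁` and `r₀ > (cb₁ − m₁)(1 − β)/(b₂c)`, for every
`n ∈ ℕ` and `d_u > 0`: `α(n, d_u) > α(n+1, d_u) ↔ d_u > d_u^{n,n+1}` and
`α(n, d_u) = α(n+1, d_u) ↔ d_u = d_u^{n,n+1}`; equivalently,
`d_u ↦ α(n, d_u) − α(n+1, d_u)` is strictly increasing and vanishes exactly at
`d_u^{n,n+1}`. -/
theorem stmt11
    (a b₁ b₂ c m₁ r₀ d_v ℓ β : ℝ)
    (ha : 0 < a) (hb₁ : 0 < b₁) (hb₂ : 0 < b₂) (hc0 : 0 < c) (hm₁ : 0 < m₁)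
    (hr₀ : 0 < r₀) (hdv : 0 < d_v) (hℓ : 0 < ℓ) (hβ0 : 0 < β) (hβ1 : β < 1)
    (ϖ ustar vstar : ℝ)
    (hϖ : ϖ = m₁ * (c * b₁ - m₁) / (c ^ 2 * b₁ * b₂))
    (hustar : ustar = (1 / a) * (r₀ - (c * b₁ - m₁) * (1 - β) / (b₂ * c)))
    (hvstar : vstar = (c * b₁ - m₁) * (1 - β) * ustar / (b₂ * m₁))
    (αf : ℕ → ℝ → ℝ)
    (hαf : ∀ (n : ℕ) (du : ℝ), αf n du =
      -(((n : ℝ) ^ 4 / ℓ ^ 4) * du * d_v +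
          ((n : ℝ) ^ 2 / ℓ ^ 2) * (d_v * (a * ustar - (1 - β) * ϖ) + du * c * b₂ * ϖ)
          + a * c * b₂ * ustar * ϖ)
        / (((n : ℝ) ^ 2 / ℓ ^ 2) * c * b₂ * vstar * ϖ))
    (dunn : ℕ → ℝ)
    (hdunn : ∀ n : ℕ, dunn n =
      a * c * b₂ * ustar * ϖ * ℓ ^ 4 / (d_v * (n : ℝ) ^ 2 * ((n : ℝ) + 1) ^ 2))
    (hc : c > m₁ / b₁) (hr : r₀ > (c * b₁ - m₁) * (1 - β) / (b₂ * c)) :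
    ∀ n : ℕ, 0 < n →
      (∀ du : ℝ, 0 < du →
        (αf n du > αf (n + 1) du ↔ du > dunn n) ∧
        (αf n du = αf (n + 1) du ↔ du = dunn n)) ∧
      StrictMonoOn (fun du => αf n du - αf (n + 1) du) (Set.Ioi (0 : ℝ)) ∧
      (∀ du : ℝ, 0 < du → (αf n du - αf (n + 1) du = 0 ↔ du = dunn n)) :=
  stmt11_general a b₁ b₂ c m₁ r₀ d_v ℓ β ha hb₁ hb₂ hc0 hm₁ hdv hℓ hβ1 ϖ ustar vstar hϖ hustar
    hvstar αf hαf dunn hdunn hc hr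
end

section
/- Assume c > m₁/b₁ and r̲₀ < r₀ < r̄₀. Let n ∈ Λ with n − 1 ∈ Λ, and let d_u satisfy d_u^{n,n+1} < d_u < d_u^{n−1,n}. Then for every m ∈ Λ with m ≠ n, α(m, d_u) < α(n, d_u); that is, on the interval (d_u^{n,n+1}, d_u^{n−1,n}) the first Turing bifurcation curve is given by α = α(n, d_u). -/
/-!
Writing `s = k²/ℓ²`, `K = d_u d_v`, `A = a c b₂ u* ϖ` and `P = c b₂ v* ϖ > 0`, one has
`α(k, d_u) = -(B + K s + A / s) / P` with `B` independent of `k`. So the mode maximising `α`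
minimises `g(s) = K s + A / s`, and `g(s) - g(t) = (s - t)(K s t - A) / (s t)`. For integer
wavenumbers `m ≠ n` the sign of `K m² n² - A ℓ⁴` is pinned down by `d_u^{n,n+1} < d_u < d_u^{n-1,n}`:
these thresholds are exactly where the neighbouring modes `n ± 1` tie with `n`.
-/

lemma mul_add_div_lt_mul_add_div {K A s t : ℝ} (hs : 0 < s) (ht : 0 < t)
    (h : 0 < (s - t) * (K * s * t - A)) : K * t + A / t < K * s + A / s := by
  have hdiff : K * s + A / s - (K * t + A / t) = (s - t) * (K * s * t - A) / (s * t) := by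
    field_simp
    ring
  have : 0 < K * s + A / s - (K * t + A / t) := hdiff ▸ by positivity
  linarith

lemma sq_sub_sq_mul_sub_pos {K C : ℝ} {m n : ℕ} (hK : 0 ≤ K)
    (hlo : C < K * (n ^ 2 * (n + 1) ^ 2)) (hhi : K * ((n - 1) ^ 2 * n ^ 2) < C) (hmn : m ≠ n) :
    0 < ((m : ℝ) ^ 2 - n ^ 2) * (K * (m ^ 2 * n ^ 2) - C) := by
  rcases hmn.lt_or_gt with hlt | hgt
  · have hm : (m : ℝ) + 1 ≤ n := by exact_mod_cast hlt
    have hsq : (m : ℝ) ^ 2 < n ^ 2 := by gcongr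
    have hK' : K * (m ^ 2 * n ^ 2) ≤ K * ((n - 1) ^ 2 * n ^ 2) := by
      gcongr
      linarith
    exact mul_pos_of_neg_of_neg (by linarith) (by linarith)
  · have hm : (n : ℝ) + 1 ≤ m := by exact_mod_cast hgt
    have hsq : (n : ℝ) ^ 2 < m ^ 2 := by gcongr
    have hK' : K * (n ^ 2 * (n + 1) ^ 2) ≤ K * (m ^ 2 * n ^ 2) := by
      rw [mul_comm ((m : ℝ) ^ 2)]
      gcongr
    exact mul_pos (by linarith) (by linarith)

lemma mul_add_div_sq_div_sq_lt {K C ℓ : ℝ} {m n : ℕ} (hℓ : 0 < ℓ) (hm : (0 : ℝ) < m)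
    (hn : (0 : ℝ) < n) (hK : 0 ≤ K) (hlo : C * ℓ ^ 4 < K * (n ^ 2 * (n + 1) ^ 2))
    (hhi : K * ((n - 1) ^ 2 * n ^ 2) < C * ℓ ^ 4) (hmn : m ≠ n) :
    K * (n ^ 2 / ℓ ^ 2) + C / (n ^ 2 / ℓ ^ 2) < K * (m ^ 2 / ℓ ^ 2) + C / (m ^ 2 / ℓ ^ 2) := by
  refine mul_add_div_lt_mul_add_div (by positivity) (by positivity) ?_
  have hscale : ((m : ℝ) ^ 2 / ℓ ^ 2 - n ^ 2 / ℓ ^ 2) * (K * (m ^ 2 / ℓ ^ 2) * (n ^ 2 / ℓ ^ 2) - C)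
      = ((m : ℝ) ^ 2 - n ^ 2) * (K * (m ^ 2 * n ^ 2) - C * ℓ ^ 4) / ℓ ^ 6 := by
    field_simp
  rw [hscale]
  have := sq_sub_sq_mul_sub_pos hK hlo hhi hmn
  positivity

theorem stmt12_general
    (a b₁ b₂ c m₁ r₀ d_v ℓ β : ℝ)
    (ha : 0 < a) (hb₁ : 0 < b₁) (hb₂ : 0 < b₂) (hc0 : 0 < c) (hm₁ : 0 < m₁)
    (hdv : 0 < d_v) (hℓ : 0 < ℓ) (hβ1 : β < 1)
    (ϖ ustar vstar rlow nhat : ℝ)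
    (hϖ : ϖ = m₁ * (c * b₁ - m₁) / (c ^ 2 * b₁ * b₂))
    (hustar : ustar = (1 / a) * (r₀ - (c * b₁ - m₁) * (1 - β) / (b₂ * c)))
    (hvstar : vstar = (c * b₁ - m₁) * (1 - β) * ustar / (b₂ * m₁))
    (hrlow : rlow = max ((c * b₁ - m₁) * (1 - β) / (b₂ * c))
        (((c * b₁ + m₁) * (1 - β) - c * b₂ * m₁) * (c * b₁ - m₁) / (c ^ 2 * b₁ * b₂)))
    (hnhat : nhat = ℓ * Real.sqrt (a * c * b₂ * ustar * ϖ / (d_v * ((1 - β) * ϖ - a * ustar))))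
    (αf : ℕ → ℝ → ℝ)
    (hαf : ∀ (n : ℕ) (du : ℝ), αf n du =
      -(((n : ℝ) ^ 4 / ℓ ^ 4) * du * d_v +
          ((n : ℝ) ^ 2 / ℓ ^ 2) * (d_v * (a * ustar - (1 - β) * ϖ) + du * c * b₂ * ϖ)
          + a * c * b₂ * ustar * ϖ)
        / (((n : ℝ) ^ 2 / ℓ ^ 2) * c * b₂ * vstar * ϖ))
    (dunn : ℕ → ℝ)
    (hdunn : ∀ n : ℕ, dunn n =
      a * c * b₂ * ustar * ϖ * ℓ ^ 4 / (d_v * (n : ℝ) ^ 2 * ((n : ℝ) + 1) ^ 2))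
    (hc : c > m₁ / b₁) (hr1 : rlow < r₀)
    (n : ℕ)
    (hn1Λ : nhat < ((n - 1 : ℕ) : ℝ))
    (du : ℝ) (hdu1 : dunn n < du) (hdu2 : du < dunn (n - 1)) :
    ∀ m : ℕ, nhat < (m : ℝ) → m ≠ n → αf m du < αf n du := by
  intro m hm hmn
  have hcb : 0 < c * b₁ - m₁ := by rw [gt_iff_lt, div_lt_iff₀ hb₁] at hc; linarith
  have hϖ0 : 0 < ϖ := hϖ ▸ by positivity
  have hu0 : 0 < ustar := by
    have := sub_pos.2 ((le_max_left _ _).trans_lt (hrlow ▸ hr1))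
    rw [hustar]; positivity
  have hv0 : 0 < vstar := by have := sub_pos.2 hβ1; rw [hvstar]; positivity
  have hnhat0 : 0 ≤ nhat := hnhat ▸ by positivity
  have hm0 : (0 : ℝ) < m := hnhat0.trans_lt hm
  have hn : 1 < n := by
    have : 0 < n - 1 := by exact_mod_cast hnhat0.trans_lt hn1Λ
    omega
  have hn' : (0 : ℝ) < n - 1 := by rw [sub_pos]; exact_mod_cast hn
  have hn0 : (0 : ℝ) < n := by linarith
  set A := a * c * b₂ * ustar * ϖ
  have hdu0 : 0 < du := (hdunn n ▸ by positivity : 0 < dunn n).trans hdu1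
  rw [hdunn, div_lt_iff₀ (by positivity)] at hdu1
  rw [hdunn, Nat.cast_pred (by omega), sub_add_cancel, lt_div_iff₀ (by positivity)] at hdu2
  have hα : ∀ k : ℕ, (0 : ℝ) < k → αf k du = -((d_v * (a * ustar - (1 - β) * ϖ) + du * c * b₂ * ϖ)
      + (du * d_v * (k ^ 2 / ℓ ^ 2) + A / (k ^ 2 / ℓ ^ 2))) / (c * b₂ * vstar * ϖ) := by
    intro k hk
    rw [hαf]
    field_simp
    ring
  rw [hα m hm0, hα n hn0, div_lt_div_iff_of_pos_right (by positivity), neg_lt_neg_iff,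
    add_lt_add_iff_left]
  exact mul_add_div_sq_div_sq_lt hℓ hm0 hn0 (by positivity) (by linarith) (by linarith) hmn

/-- Under `c > m₁/b₁` and `r̲₀ < r₀ < r̄₀`, if `n ∈ Λ` with
`n − 1 ∈ Λ` and `d_u ∈ (d_u^{n,n+1}, d_u^{n−1,n})`, then `α(m, d_u) < α(n, d_u)`
for every `m ∈ Λ` with `m ≠ n`: the first Turing bifurcation curve on that
interval is `α = α(n, d_u)`. -/
theorem stmt12
    (a b₁ b₂ c m₁ r₀ d_v ℓ β : ℝ)
    (ha : 0 < a) (hb₁ : 0 < b₁) (hb₂ : 0 < b₂) (hc0 : 0 < c) (hm₁ : 0 < m₁)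
    (hr₀ : 0 < r₀) (hdv : 0 < d_v) (hℓ : 0 < ℓ) (hβ0 : 0 < β) (hβ1 : β < 1)
    (ϖ ustar vstar rlow rbar nhat : ℝ)
    (hϖ : ϖ = m₁ * (c * b₁ - m₁) / (c ^ 2 * b₁ * b₂))
    (hustar : ustar = (1 / a) * (r₀ - (c * b₁ - m₁) * (1 - β) / (b₂ * c)))
    (hvstar : vstar = (c * b₁ - m₁) * (1 - β) * ustar / (b₂ * m₁))
    (hrlow : rlow = max ((c * b₁ - m₁) * (1 - β) / (b₂ * c))
        (((c * b₁ + m₁) * (1 - β) - c * b₂ * m₁) * (c * b₁ - m₁) / (c ^ 2 * b₁ * b₂)))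
    (hrbar : rbar = (c * b₁ - m₁) * (c * b₁ + m₁) * (1 - β) / (c ^ 2 * b₁ * b₂))
    (hnhat : nhat = ℓ * Real.sqrt (a * c * b₂ * ustar * ϖ / (d_v * ((1 - β) * ϖ - a * ustar))))
    (αf : ℕ → ℝ → ℝ)
    (hαf : ∀ (n : ℕ) (du : ℝ), αf n du =
      -(((n : ℝ) ^ 4 / ℓ ^ 4) * du * d_v +
          ((n : ℝ) ^ 2 / ℓ ^ 2) * (d_v * (a * ustar - (1 - β) * ϖ) + du * c * b₂ * ϖ)
          + a * c * b₂ * ustar * ϖ)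
        / (((n : ℝ) ^ 2 / ℓ ^ 2) * c * b₂ * vstar * ϖ))
    (dunn : ℕ → ℝ)
    (hdunn : ∀ n : ℕ, dunn n =
      a * c * b₂ * ustar * ϖ * ℓ ^ 4 / (d_v * (n : ℝ) ^ 2 * ((n : ℝ) + 1) ^ 2))
    (hc : c > m₁ / b₁) (hr1 : rlow < r₀) (hr2 : r₀ < rbar)
    (n : ℕ) (hn1 : 1 ≤ n)
    (hnΛ : nhat < (n : ℝ)) (hn1Λ : nhat < ((n - 1 : ℕ) : ℝ))
    (du : ℝ) (hdu1 : dunn n < du) (hdu2 : du < dunn (n - 1)) :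
    ∀ m : ℕ, nhat < (m : ℝ) → m ≠ n → αf m du < αf n du :=
  stmt12_general a b₁ b₂ c m₁ r₀ d_v ℓ β ha hb₁ hb₂ hc0 hm₁ hdv hℓ hβ1 ϖ ustar vstar rlow nhat hϖ
    hustar hvstar hrlow hnhat αf hαf dunn hdunn hc hr1 n hn1Λ du hdu1 hdu2
end

section
/- (Lemma 3.4(i), hyperbolicity of the other modes) Assume c > m₁/b₁ and r₀ > r̲₀. Let d_u > 0, n₁ ∈ ℕ, and let α > 0 satisfy α > α(m, d_u) for every m ∈ ℕ with m ≠ n₁. Then for every n ∈ ℕ₀ with n ≠ n₁: DET_n(d_u, α) > 0 and TR_n(d_u) < 0, and hence every complex root λ of λ² − TR_n(d_u)·λ + DET_n(d_u, α) = 0 has strictly negative real part. -/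
theorem trace_gap_pos {a b₁ b₂ c m₁ r₀ β ϖ ustar : ℝ} (ha : a ≠ 0) (hb₁ : b₁ ≠ 0) (hb₂ : b₂ ≠ 0)
    (hc : c ≠ 0) (hϖ : ϖ = m₁ * (c * b₁ - m₁) / (c ^ 2 * b₁ * b₂))
    (hustar : ustar = (1 / a) * (r₀ - (c * b₁ - m₁) * (1 - β) / (b₂ * c)))
    (hr : ((c * b₁ + m₁) * (1 - β) - c * b₂ * m₁) * (c * b₁ - m₁) / (c ^ 2 * b₁ * b₂) < r₀) :
    0 < a * ustar - (1 - β) * ϖ + c * b₂ * ϖ := by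
  have hgap : a * ustar - (1 - β) * ϖ + c * b₂ * ϖ =
      r₀ - ((c * b₁ + m₁) * (1 - β) - c * b₂ * m₁) * (c * b₁ - m₁) / (c ^ 2 * b₁ * b₂) := by
    rw [hustar, hϖ]; field_simp; ring
  rw [hgap]
  exact sub_pos.mpr hr

theorem stmt14_general
    (a b₁ b₂ c m₁ r₀ d_v ℓ β : ℝ)
    (ha : 0 < a) (hb₁ : 0 < b₁) (hb₂ : 0 < b₂) (hm₁ : 0 < m₁)
    (hdv : 0 < d_v) (hℓ : 0 < ℓ) (hβ1 : β < 1)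
    (ϖ ustar vstar rlow : ℝ)
    (hϖ : ϖ = m₁ * (c * b₁ - m₁) / (c ^ 2 * b₁ * b₂))
    (hustar : ustar = (1 / a) * (r₀ - (c * b₁ - m₁) * (1 - β) / (b₂ * c)))
    (hvstar : vstar = (c * b₁ - m₁) * (1 - β) * ustar / (b₂ * m₁))
    (hrlow : rlow = max ((c * b₁ - m₁) * (1 - β) / (b₂ * c))
        (((c * b₁ + m₁) * (1 - β) - c * b₂ * m₁) * (c * b₁ - m₁) / (c ^ 2 * b₁ * b₂)))
    (DET : ℕ → ℝ → ℝ → ℝ)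
    (hDET : ∀ (n : ℕ) (du α : ℝ), DET n du α =
      ((n : ℝ) ^ 4 / ℓ ^ 4) * du * d_v +
        ((n : ℝ) ^ 2 / ℓ ^ 2) * (d_v * (a * ustar - (1 - β) * ϖ) + du * c * b₂ * ϖ
          + α * c * b₂ * vstar * ϖ) + a * c * b₂ * ustar * ϖ)
    (TR : ℕ → ℝ → ℝ)
    (hTR : ∀ (n : ℕ) (du : ℝ), TR n du =
      -((n : ℝ) ^ 2 / ℓ ^ 2) * (du + d_v) - (a * ustar - (1 - β) * ϖ) - c * b₂ * ϖ)
    (αf : ℕ → ℝ → ℝ)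
    (hαf : ∀ (n : ℕ) (du : ℝ), αf n du =
      -(((n : ℝ) ^ 4 / ℓ ^ 4) * du * d_v +
          ((n : ℝ) ^ 2 / ℓ ^ 2) * (d_v * (a * ustar - (1 - β) * ϖ) + du * c * b₂ * ϖ)
          + a * c * b₂ * ustar * ϖ)
        / (((n : ℝ) ^ 2 / ℓ ^ 2) * c * b₂ * vstar * ϖ))
    (hc : c > m₁ / b₁) (hr : r₀ > rlow)
    (du : ℝ) (hdu : 0 < du) (n₁ : ℕ)
    (α : ℝ)
    (hα : ∀ m : ℕ, 0 < m → m ≠ n₁ → α > αf m du) :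
    ∀ n : ℕ, n ≠ n₁ →
      DET n du α > 0 ∧ TR n du < 0 ∧
        ∀ lam : ℂ, lam ^ 2 - (TR n du : ℂ) * lam + (DET n du α : ℂ) = 0 → lam.re < 0 := by
  have hc0 : 0 < c := (div_pos hm₁ hb₁).trans hc
  have hcb : 0 < c * b₁ - m₁ := by rwa [gt_iff_lt, div_lt_iff₀ hb₁, ← sub_pos] at hc
  rw [hrlow, gt_iff_lt, max_lt_iff] at hr
  have hϖpos : 0 < ϖ := by rw [hϖ]; positivity
  have hu : 0 < ustar := by
    rw [hustar]; exact mul_pos (one_div_pos.mpr ha) (sub_pos.mpr hr.1)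
  have hv : 0 < vstar := by
    have := sub_pos.mpr hβ1
    rw [hvstar]; positivity
  have hgap := trace_gap_pos ha.ne' hb₁.ne' hb₂.ne' hc0.ne' hϖ hustar hr.2
  intro n hn
  have hTRn : TR n du < 0 := by
    rw [hTR]
    linarith [mul_nonneg (by positivity : (0 : ℝ) ≤ (n : ℝ) ^ 2 / ℓ ^ 2) (add_pos hdu hdv).le]
  have hDETn : 0 < DET n du α := by
    rcases n.eq_zero_or_pos with rfl | hpos
    · have hconst : 0 < a * c * b₂ * ustar * ϖ := by positivity
      simpa [hDET] using hconst
    · have hslope : 0 < (n : ℝ) ^ 2 / ℓ ^ 2 * c * b₂ * vstar * ϖ := by positivity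
      have hαn := hα n hpos hn
      rw [hαf, gt_iff_lt, div_lt_iff₀ hslope] at hαn
      rw [hDET]; linear_combination hαn
  exact ⟨hDETn, hTRn, fun z hz => Complex.re_neg_of_sq_sub_mul_add_eq_zero hTRn hDETn hz⟩

/-- Lemma 3.4(i), hyperbolicity of the other modes: Under
`c > m₁/b₁` and `r₀ > r̲₀`, if `d_u > 0`, `n₁ ∈ ℕ`, and `α > 0` satisfies
`α > α(m, d_u)` for all `m ∈ ℕ`, `m ≠ n₁`, then for every `n ∈ ℕ₀`, `n ≠ n₁`:
`DET_n(d_u, α) > 0`, `TR_n(d_u) < 0`, and every complex root of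
`λ² − TR_n(d_u)λ + DET_n(d_u, α) = 0` has strictly negative real part. -/
theorem stmt14
    (a b₁ b₂ c m₁ r₀ d_v ℓ β : ℝ)
    (ha : 0 < a) (hb₁ : 0 < b₁) (hb₂ : 0 < b₂) (hc0 : 0 < c) (hm₁ : 0 < m₁)
    (hr₀ : 0 < r₀) (hdv : 0 < d_v) (hℓ : 0 < ℓ) (hβ0 : 0 < β) (hβ1 : β < 1)
    (ϖ ustar vstar rlow : ℝ)
    (hϖ : ϖ = m₁ * (c * b₁ - m₁) / (c ^ 2 * b₁ * b₂))
    (hustar : ustar = (1 / a) * (r₀ - (c * b₁ - m₁) * (1 - β) / (b₂ * c)))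
    (hvstar : vstar = (c * b₁ - m₁) * (1 - β) * ustar / (b₂ * m₁))
    (hrlow : rlow = max ((c * b₁ - m₁) * (1 - β) / (b₂ * c))
        (((c * b₁ + m₁) * (1 - β) - c * b₂ * m₁) * (c * b₁ - m₁) / (c ^ 2 * b₁ * b₂)))
    (DET : ℕ → ℝ → ℝ → ℝ)
    (hDET : ∀ (n : ℕ) (du α : ℝ), DET n du α =
      ((n : ℝ) ^ 4 / ℓ ^ 4) * du * d_v +
        ((n : ℝ) ^ 2 / ℓ ^ 2) * (d_v * (a * ustar - (1 - β) * ϖ) + du * c * b₂ * ϖ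
          + α * c * b₂ * vstar * ϖ) + a * c * b₂ * ustar * ϖ)
    (TR : ℕ → ℝ → ℝ)
    (hTR : ∀ (n : ℕ) (du : ℝ), TR n du =
      -((n : ℝ) ^ 2 / ℓ ^ 2) * (du + d_v) - (a * ustar - (1 - β) * ϖ) - c * b₂ * ϖ)
    (αf : ℕ → ℝ → ℝ)
    (hαf : ∀ (n : ℕ) (du : ℝ), αf n du =
      -(((n : ℝ) ^ 4 / ℓ ^ 4) * du * d_v +
          ((n : ℝ) ^ 2 / ℓ ^ 2) * (d_v * (a * ustar - (1 - β) * ϖ) + du * c * b₂ * ϖ)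
          + a * c * b₂ * ustar * ϖ)
        / (((n : ℝ) ^ 2 / ℓ ^ 2) * c * b₂ * vstar * ϖ))
    (hc : c > m₁ / b₁) (hr : r₀ > rlow)
    (du : ℝ) (hdu : 0 < du) (n₁ : ℕ) (hn₁ : 0 < n₁)
    (α : ℝ) (hαpos : 0 < α)
    (hα : ∀ m : ℕ, 0 < m → m ≠ n₁ → α > αf m du) :
    ∀ n : ℕ, n ≠ n₁ →
      DET n du α > 0 ∧ TR n du < 0 ∧
        ∀ lam : ℂ, lam ^ 2 - (TR n du : ℂ) * lam + (DET n du α : ℂ) = 0 → lam.re < 0 :=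
  stmt14_general a b₁ b₂ c m₁ r₀ d_v ℓ β ha hb₁ hb₂ hm₁ hdv hℓ hβ1 ϖ ustar vstar rlow hϖ hustar
    hvstar hrlow DET hDET TR hTR αf hαf hc hr du hdu n₁ α hα
end

section
/- (Transversality, formula (3.19)) Assume c > m₁/b₁ and r₀ > r̲₀. Let d_u > 0, n₁ ∈ ℕ, and set α* := α(n₁, d_u). For Γ_{n₁}(λ, α) := λ² − TR_{n₁}(d_u)·λ + DET_{n₁}(d_u, α), the partial derivatives at (λ, α) = (0, α*) satisfy ∂Γ_{n₁}/∂α = (n₁²/ℓ²)c b₂ v* ϖ and ∂Γ_{n₁}/∂λ = −TR_{n₁}(d_u) > 0, and therefore −(∂Γ_{n₁}/∂α)/(∂Γ_{n₁}/∂λ) = −((n₁²/ℓ²)c b₂ v* ϖ)/(−TR_{n₁}(d_u)) < 0. -/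
/-!
`Γ_{n₁}` is affine in `α` with slope `(n₁²/ℓ²) c b₂ v* ϖ` and quadratic in `λ`, so both partial
derivatives are read off directly. The slope is positive: `c b₁ > m₁` gives `ϖ > 0`, and `r₀`
exceeding the first term of `r̲₀` gives `u* > 0`, hence `v* > 0`. The trace is negative because its
constant part is `a u* − (1 − β)ϖ + c b₂ ϖ = r₀ − ((c b₁ + m₁)(1 − β) − c b₂ m₁)(c b₁ − m₁)/(c² b₁ b₂)`,
which is positive as `r₀` also exceeds the second term of `r̲₀`.
-/

theorem deriv_mul_add (k b x : ℝ) : deriv (fun y => k * y + b) x = k := by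
  simp

theorem deriv_sq_sub_mul_add (T D x : ℝ) :
    deriv (fun y => y ^ 2 - T * y + D) x = 2 * x - T := by
  have h := ((hasDerivAt_pow 2 x).sub ((hasDerivAt_id x).const_mul T)).add_const D
  simpa using h.deriv

section Equilibrium

variable {a b₁ b₂ c m₁ r₀ β : ℝ}

theorem varpi_pos (hb₁ : 0 < b₁) (hb₂ : 0 < b₂) (hc : 0 < c) (hm₁ : 0 < m₁) (hcb : m₁ < c * b₁) :
    0 < m₁ * (c * b₁ - m₁) / (c ^ 2 * b₁ * b₂) := by
  have : 0 < c * b₁ - m₁ := sub_pos.2 hcb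
  positivity

theorem a_mul_ustar_sub_varpi_add_eq (ha : a ≠ 0) (hb₁ : b₁ ≠ 0) (hb₂ : b₂ ≠ 0) (hc : c ≠ 0) :
    a * ((1 / a) * (r₀ - (c * b₁ - m₁) * (1 - β) / (b₂ * c)))
        - (1 - β) * (m₁ * (c * b₁ - m₁) / (c ^ 2 * b₁ * b₂))
        + c * b₂ * (m₁ * (c * b₁ - m₁) / (c ^ 2 * b₁ * b₂))
      = r₀ - ((c * b₁ + m₁) * (1 - β) - c * b₂ * m₁) * (c * b₁ - m₁) / (c ^ 2 * b₁ * b₂) := by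
  field_simp
  ring

end Equilibrium

theorem stmt15_general
    (a b₁ b₂ c m₁ r₀ d_v ℓ β : ℝ)
    (ha : 0 < a) (hb₁ : 0 < b₁) (hb₂ : 0 < b₂) (hc0 : 0 < c) (hm₁ : 0 < m₁)
    (hdv : 0 < d_v) (hℓ : 0 < ℓ) (hβ1 : β < 1)
    (ϖ ustar vstar rlow : ℝ)
    (hϖ : ϖ = m₁ * (c * b₁ - m₁) / (c ^ 2 * b₁ * b₂))
    (hustar : ustar = (1 / a) * (r₀ - (c * b₁ - m₁) * (1 - β) / (b₂ * c)))
    (hvstar : vstar = (c * b₁ - m₁) * (1 - β) * ustar / (b₂ * m₁))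
    (hrlow : rlow = max ((c * b₁ - m₁) * (1 - β) / (b₂ * c))
        (((c * b₁ + m₁) * (1 - β) - c * b₂ * m₁) * (c * b₁ - m₁) / (c ^ 2 * b₁ * b₂)))
    (DET : ℕ → ℝ → ℝ → ℝ)
    (hDET : ∀ (n : ℕ) (du α : ℝ), DET n du α =
      ((n : ℝ) ^ 4 / ℓ ^ 4) * du * d_v +
        ((n : ℝ) ^ 2 / ℓ ^ 2) * (d_v * (a * ustar - (1 - β) * ϖ) + du * c * b₂ * ϖ
          + α * c * b₂ * vstar * ϖ) + a * c * b₂ * ustar * ϖ)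
    (TR : ℕ → ℝ → ℝ)
    (hTR : ∀ (n : ℕ) (du : ℝ), TR n du =
      -((n : ℝ) ^ 2 / ℓ ^ 2) * (du + d_v) - (a * ustar - (1 - β) * ϖ) - c * b₂ * ϖ)
    (hc : c > m₁ / b₁) (hr : r₀ > rlow)
    (du : ℝ) (hdu : 0 < du) (n₁ : ℕ) (hn₁ : 0 < n₁)
    (αstar : ℝ) :
    deriv (fun α : ℝ => (0 : ℝ) ^ 2 - TR n₁ du * 0 + DET n₁ du α) αstar
        = ((n₁ : ℝ) ^ 2 / ℓ ^ 2) * c * b₂ * vstar * ϖ ∧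
    deriv (fun lam : ℝ => lam ^ 2 - TR n₁ du * lam + DET n₁ du αstar) 0 = -(TR n₁ du) ∧
    0 < -(TR n₁ du) ∧
    -(((n₁ : ℝ) ^ 2 / ℓ ^ 2) * c * b₂ * vstar * ϖ) / (-(TR n₁ du)) < 0 := by
  have hcb : m₁ < c * b₁ := by rwa [gt_iff_lt, div_lt_iff₀ hb₁] at hc
  obtain ⟨hr₁, hr₂⟩ := max_lt_iff.1 (hrlow ▸ hr)
  have hϖpos : 0 < ϖ := hϖ ▸ varpi_pos hb₁ hb₂ hc0 hm₁ hcb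
  have hustar_pos : 0 < ustar := by
    have := sub_pos.2 hr₁
    rw [hustar]; positivity
  have hvstar_pos : 0 < vstar := by
    have := sub_pos.2 hcb
    have := sub_pos.2 hβ1
    rw [hvstar]; positivity
  have hslope : 0 < ((n₁ : ℝ) ^ 2 / ℓ ^ 2) * c * b₂ * vstar * ϖ := by positivity
  have htrace : 0 < -(TR n₁ du) := by
    have hconst := a_mul_ustar_sub_varpi_add_eq (β := β) (r₀ := r₀) (m₁ := m₁)
      ha.ne' hb₁.ne' hb₂.ne' hc0.ne'
    rw [← hustar, ← hϖ] at hconst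
    have : 0 < ((n₁ : ℝ) ^ 2 / ℓ ^ 2) * (du + d_v) := by positivity
    rw [hTR]; linarith
  have hΓ_affine : (fun α : ℝ => (0 : ℝ) ^ 2 - TR n₁ du * 0 + DET n₁ du α)
      = fun α => ((n₁ : ℝ) ^ 2 / ℓ ^ 2) * c * b₂ * vstar * ϖ * α + DET n₁ du 0 := by
    funext α; simp only [hDET]; ring
  refine ⟨hΓ_affine ▸ deriv_mul_add _ _ _, ?_, htrace, ?_⟩
  · simpa using deriv_sq_sub_mul_add (TR n₁ du) (DET n₁ du αstar) 0
  · exact div_neg_of_neg_of_pos (neg_neg_of_pos hslope) htrace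

/-- Transversality, formula (3.19): Under `c > m₁/b₁` and
`r₀ > r̲₀`, with `α* := α(n₁, d_u)` and `Γ_{n₁}(λ, α) = λ² − TR_{n₁}(d_u)λ +
DET_{n₁}(d_u, α)`, at `(λ, α) = (0, α*)` we have `∂Γ_{n₁}/∂α = (n₁²/ℓ²)cb₂v*ϖ`,
`∂Γ_{n₁}/∂λ = −TR_{n₁}(d_u) > 0`, and the ratio
`−(∂Γ_{n₁}/∂α)/(∂Γ_{n₁}/∂λ) < 0`. -/
theorem stmt15
    (a b₁ b₂ c m₁ r₀ d_v ℓ β : ℝ)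
    (ha : 0 < a) (hb₁ : 0 < b₁) (hb₂ : 0 < b₂) (hc0 : 0 < c) (hm₁ : 0 < m₁)
    (hr₀ : 0 < r₀) (hdv : 0 < d_v) (hℓ : 0 < ℓ) (hβ0 : 0 < β) (hβ1 : β < 1)
    (ϖ ustar vstar rlow : ℝ)
    (hϖ : ϖ = m₁ * (c * b₁ - m₁) / (c ^ 2 * b₁ * b₂))
    (hustar : ustar = (1 / a) * (r₀ - (c * b₁ - m₁) * (1 - β) / (b₂ * c)))
    (hvstar : vstar = (c * b₁ - m₁) * (1 - β) * ustar / (b₂ * m₁))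
    (hrlow : rlow = max ((c * b₁ - m₁) * (1 - β) / (b₂ * c))
        (((c * b₁ + m₁) * (1 - β) - c * b₂ * m₁) * (c * b₁ - m₁) / (c ^ 2 * b₁ * b₂)))
    (DET : ℕ → ℝ → ℝ → ℝ)
    (hDET : ∀ (n : ℕ) (du α : ℝ), DET n du α =
      ((n : ℝ) ^ 4 / ℓ ^ 4) * du * d_v +
        ((n : ℝ) ^ 2 / ℓ ^ 2) * (d_v * (a * ustar - (1 - β) * ϖ) + du * c * b₂ * ϖ
          + α * c * b₂ * vstar * ϖ) + a * c * b₂ * ustar * ϖ)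
    (TR : ℕ → ℝ → ℝ)
    (hTR : ∀ (n : ℕ) (du : ℝ), TR n du =
      -((n : ℝ) ^ 2 / ℓ ^ 2) * (du + d_v) - (a * ustar - (1 - β) * ϖ) - c * b₂ * ϖ)
    (αf : ℕ → ℝ → ℝ)
    (hαf : ∀ (n : ℕ) (du : ℝ), αf n du =
      -(((n : ℝ) ^ 4 / ℓ ^ 4) * du * d_v +
          ((n : ℝ) ^ 2 / ℓ ^ 2) * (d_v * (a * ustar - (1 - β) * ϖ) + du * c * b₂ * ϖ)
          + a * c * b₂ * ustar * ϖ)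
        / (((n : ℝ) ^ 2 / ℓ ^ 2) * c * b₂ * vstar * ϖ))
    (hc : c > m₁ / b₁) (hr : r₀ > rlow)
    (du : ℝ) (hdu : 0 < du) (n₁ : ℕ) (hn₁ : 0 < n₁)
    (αstar : ℝ) (hαstar : αstar = αf n₁ du) :
    deriv (fun α : ℝ => (0 : ℝ) ^ 2 - TR n₁ du * 0 + DET n₁ du α) αstar
        = ((n₁ : ℝ) ^ 2 / ℓ ^ 2) * c * b₂ * vstar * ϖ ∧
    deriv (fun lam : ℝ => lam ^ 2 - TR n₁ du * lam + DET n₁ du αstar) 0 = -(TR n₁ du) ∧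
    0 < -(TR n₁ du) ∧
    -(((n₁ : ℝ) ^ 2 / ℓ ^ 2) * c * b₂ * vstar * ϖ) / (-(TR n₁ du)) < 0 :=
  stmt15_general a b₁ b₂ c m₁ r₀ d_v ℓ β ha hb₁ hb₂ hc0 hm₁ hdv hℓ hβ1 ϖ ustar vstar rlow hϖ hustar
    hvstar hrlow DET hDET TR hTR hc hr du hdu n₁ hn₁ αstar
end

section
/- (Lemma 3.4(ii), Turing–Turing point) Assume c > m₁/b₁ and r̲₀ < r₀ < r̄₀. Let n ∈ Λ, set d_u := d_u^{n,n+1} and α := α(n, d_u^{n,n+1}). Then α = α(n+1, d_u^{n,n+1}), DET_n(d_u, α) = 0 and DET_{n+1}(d_u, α) = 0, while TR_n(d_u) < 0 and TR_{n+1}(d_u) < 0; hence λ = 0 is a simple root of both characteristic quadratics λ² − TR_n(d_u)·λ + DET_n(d_u, α) and λ² − TR_{n+1}(d_u)·λ + DET_{n+1}(d_u, α). -/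
/-!
Write `k = n²/ℓ²`. The determinant `DET_n` is affine in `α`, so `α(n, d_u)` is its unique
zero. Multiplying out, `α(n, d_u)` depends on `n` only through `k d_u d_v + K / k`
(`K = a c b₂ u* ϖ`), and at `d_u = K / (d_v k_n k_{n+1})` this quantity takes the same value
`K / k_n + K / k_{n+1}` for both modes; hence `α(n, ·) = α(n+1, ·)` there and both determinants
vanish. The traces are negative because the trace of the kinetic Jacobian is, which is exactly
the second half of `r̲₀ < r₀`; finally the derivative of `λ² − T λ + D` at `0` is `−T ≠ 0`.
-/

section ModeAnalysis

variable {dv A B C K k k' du : ℝ}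

/-- `DET_n` in the variable `k = n²/ℓ²`, with `A = a u* − (1 − β)ϖ`, `B = c b₂ ϖ`,
`C = c b₂ v* ϖ`, `K = a c b₂ u* ϖ`. -/
def modeDet (dv A B C K k du α : ℝ) : ℝ :=
  k ^ 2 * du * dv + k * (dv * A + du * B + α * C) + K

/-- `α(n, d_u)` in the same variables. -/
noncomputable def criticalAlpha (dv A B C K k du : ℝ) : ℝ :=
  -(k ^ 2 * du * dv + k * (dv * A + du * B) + K) / (k * C)

theorem modeDet_criticalAlpha (hk : k ≠ 0) (hC : C ≠ 0) :
    modeDet dv A B C K k du (criticalAlpha dv A B C K k du) = 0 := by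
  unfold modeDet criticalAlpha
  field_simp
  ring

theorem criticalAlpha_eq_of_turing_turing (hk : k ≠ 0) (hk' : k' ≠ 0) (hdv : dv ≠ 0) :
    criticalAlpha dv A B C K k (K / (dv * k * k')) =
      criticalAlpha dv A B C K k' (K / (dv * k * k')) := by
  unfold criticalAlpha
  field_simp
  ring

end ModeAnalysis

theorem deriv_sq_sub_mul_add_const_at_zero (T D : ℝ) :
    deriv (fun x : ℝ => x ^ 2 - T * x + D) 0 = -T := by
  have h : HasDerivAt (fun x : ℝ => x ^ 2 - T * x + D) (2 * (0 : ℝ) ^ 1 - T * 1) 0 :=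
    ((hasDerivAt_pow 2 0).sub ((hasDerivAt_id 0).const_mul T)).add_const D
  rw [h.deriv]
  ring

section SteadyState

variable {a b₁ b₂ c m₁ r₀ β ϖ ustar vstar : ℝ}

theorem steadyState_pos (ha : 0 < a) (hb₁ : 0 < b₁) (hb₂ : 0 < b₂) (hc : 0 < c) (hm₁ : 0 < m₁)
    (hβ1 : β < 1) (hϖ : ϖ = m₁ * (c * b₁ - m₁) / (c ^ 2 * b₁ * b₂))
    (hustar : ustar = (1 / a) * (r₀ - (c * b₁ - m₁) * (1 - β) / (b₂ * c)))
    (hvstar : vstar = (c * b₁ - m₁) * (1 - β) * ustar / (b₂ * m₁))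
    (hcm : m₁ / b₁ < c) (hr : (c * b₁ - m₁) * (1 - β) / (b₂ * c) < r₀) :
    0 < ϖ ∧ 0 < ustar ∧ 0 < vstar := by
  have hcb : 0 < c * b₁ - m₁ := by rw [div_lt_iff₀ hb₁] at hcm; linarith
  have hβ : 0 < 1 - β := sub_pos.mpr hβ1
  have hupos : 0 < ustar := by rw [hustar]; exact mul_pos (by positivity) (sub_pos.mpr hr)
  exact ⟨by rw [hϖ]; positivity, hupos, by rw [hvstar]; positivity⟩

/-- The left-hand side is `TR_0`, the trace of the kinetic Jacobian. -/
theorem kinetic_trace_neg (ha : 0 < a) (hb₁ : 0 < b₁) (hb₂ : 0 < b₂) (hc : 0 < c)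
    (hϖ : ϖ = m₁ * (c * b₁ - m₁) / (c ^ 2 * b₁ * b₂))
    (hustar : ustar = (1 / a) * (r₀ - (c * b₁ - m₁) * (1 - β) / (b₂ * c)))
    (hr : ((c * b₁ + m₁) * (1 - β) - c * b₂ * m₁) * (c * b₁ - m₁) / (c ^ 2 * b₁ * b₂) < r₀) :
    -(a * ustar - (1 - β) * ϖ) - c * b₂ * ϖ < 0 := by
  have hau : a * ustar = r₀ - (c * b₁ - m₁) * (1 - β) / (b₂ * c) := by
    rw [hustar]
    field_simp
  have hthreshold : ((c * b₁ + m₁) * (1 - β) - c * b₂ * m₁) * (c * b₁ - m₁) / (c ^ 2 * b₁ * b₂) =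
      (c * b₁ - m₁) * (1 - β) / (b₂ * c) + (1 - β) * ϖ - c * b₂ * ϖ := by
    rw [hϖ]
    field_simp
  linarith

end SteadyState

theorem stmt16_general
    (a b₁ b₂ c m₁ r₀ d_v ℓ β : ℝ)
    (ha : 0 < a) (hb₁ : 0 < b₁) (hb₂ : 0 < b₂) (hc0 : 0 < c) (hm₁ : 0 < m₁)
    (hdv : 0 < d_v) (hℓ : 0 < ℓ) (hβ1 : β < 1)
    (ϖ ustar vstar rlow nhat : ℝ)
    (hϖ : ϖ = m₁ * (c * b₁ - m₁) / (c ^ 2 * b₁ * b₂))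
    (hustar : ustar = (1 / a) * (r₀ - (c * b₁ - m₁) * (1 - β) / (b₂ * c)))
    (hvstar : vstar = (c * b₁ - m₁) * (1 - β) * ustar / (b₂ * m₁))
    (hrlow : rlow = max ((c * b₁ - m₁) * (1 - β) / (b₂ * c))
        (((c * b₁ + m₁) * (1 - β) - c * b₂ * m₁) * (c * b₁ - m₁) / (c ^ 2 * b₁ * b₂)))
    (hnhat : nhat = ℓ * Real.sqrt (a * c * b₂ * ustar * ϖ / (d_v * ((1 - β) * ϖ - a * ustar))))
    (DET : ℕ → ℝ → ℝ → ℝ)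
    (hDET : ∀ (n : ℕ) (du α : ℝ), DET n du α =
      ((n : ℝ) ^ 4 / ℓ ^ 4) * du * d_v +
        ((n : ℝ) ^ 2 / ℓ ^ 2) * (d_v * (a * ustar - (1 - β) * ϖ) + du * c * b₂ * ϖ
          + α * c * b₂ * vstar * ϖ) + a * c * b₂ * ustar * ϖ)
    (TR : ℕ → ℝ → ℝ)
    (hTR : ∀ (n : ℕ) (du : ℝ), TR n du =
      -((n : ℝ) ^ 2 / ℓ ^ 2) * (du + d_v) - (a * ustar - (1 - β) * ϖ) - c * b₂ * ϖ)
    (αf : ℕ → ℝ → ℝ)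
    (hαf : ∀ (n : ℕ) (du : ℝ), αf n du =
      -(((n : ℝ) ^ 4 / ℓ ^ 4) * du * d_v +
          ((n : ℝ) ^ 2 / ℓ ^ 2) * (d_v * (a * ustar - (1 - β) * ϖ) + du * c * b₂ * ϖ)
          + a * c * b₂ * ustar * ϖ)
        / (((n : ℝ) ^ 2 / ℓ ^ 2) * c * b₂ * vstar * ϖ))
    (dunn : ℕ → ℝ)
    (hdunn : ∀ n : ℕ, dunn n =
      a * c * b₂ * ustar * ϖ * ℓ ^ 4 / (d_v * (n : ℝ) ^ 2 * ((n : ℝ) + 1) ^ 2))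
    (hc : c > m₁ / b₁) (hr1 : rlow < r₀)
    (n : ℕ) (hn : nhat < (n : ℝ))
    (du α : ℝ) (hdu : du = dunn n) (hα : α = αf n (dunn n)) :
    α = αf (n + 1) (dunn n) ∧
    DET n du α = 0 ∧ DET (n + 1) du α = 0 ∧
    TR n du < 0 ∧ TR (n + 1) du < 0 ∧
    deriv (fun lam : ℝ => lam ^ 2 - TR n du * lam + DET n du α) 0 ≠ 0 ∧
    deriv (fun lam : ℝ => lam ^ 2 - TR (n + 1) du * lam + DET (n + 1) du α) 0 ≠ 0 := by
  rw [hrlow, max_lt_iff] at hr1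
  obtain ⟨hϖpos, hupos, hvpos⟩ :=
    steadyState_pos ha hb₁ hb₂ hc0 hm₁ hβ1 hϖ hustar hvstar hc hr1.1
  have hTR0 := kinetic_trace_neg ha hb₁ hb₂ hc0 hϖ hustar hr1.2
  have hnpos : 0 < (n : ℝ) := lt_of_le_of_lt (by rw [hnhat]; positivity) hn
  set k : ℕ → ℝ := fun m => (m : ℝ) ^ 2 / ℓ ^ 2 with hk
  have hkpos : ∀ m : ℕ, 0 < (m : ℝ) → 0 < k m := fun m hm => by positivity
  have hk1pos : 0 < k (n + 1) := hkpos _ (by positivity)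
  have hDET' : ∀ m du α, DET m du α =
      modeDet d_v (a * ustar - (1 - β) * ϖ) (c * b₂ * ϖ) (c * b₂ * vstar * ϖ)
        (a * c * b₂ * ustar * ϖ) (k m) du α := fun m du α => by
    rw [hDET, modeDet]; ring
  have hαf' : ∀ m du, αf m du =
      criticalAlpha d_v (a * ustar - (1 - β) * ϖ) (c * b₂ * ϖ) (c * b₂ * vstar * ϖ)
        (a * c * b₂ * ustar * ϖ) (k m) du := fun m du => by
    rw [hαf, criticalAlpha]; ring
  have hdu' : du = a * c * b₂ * ustar * ϖ / (d_v * k n * k (n + 1)) := by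
    rw [hdu, hdunn, hk]; push_cast; field_simp
  have hαeq : α = αf (n + 1) (dunn n) := by
    rw [hα, hαf', hαf', ← hdu, hdu']
    exact criticalAlpha_eq_of_turing_turing (hkpos n hnpos).ne' hk1pos.ne' hdv.ne'
  have hdupos : 0 < du := by rw [hdu']; have := hkpos n hnpos; positivity
  have hTRlt : ∀ m : ℕ, TR m du < 0 := fun m => by
    have : 0 ≤ k m * (du + d_v) := by positivity
    rw [hTR]; linarith
  have hCne : c * b₂ * vstar * ϖ ≠ 0 := by positivity
  refine ⟨hαeq, ?_, ?_, hTRlt n, hTRlt (n + 1), ?_, ?_⟩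
  · rw [hDET', hα, hαf', ← hdu]
    exact modeDet_criticalAlpha (hkpos n hnpos).ne' hCne
  · rw [hDET', hαeq, hαf', ← hdu]
    exact modeDet_criticalAlpha hk1pos.ne' hCne
  · rw [deriv_sq_sub_mul_add_const_at_zero, neg_ne_zero]; exact (hTRlt n).ne
  · rw [deriv_sq_sub_mul_add_const_at_zero, neg_ne_zero]; exact (hTRlt (n + 1)).ne

/-- Lemma 3.4(ii), Turing–Turing point: Under `c > m₁/b₁` and
`r̲₀ < r₀ < r̄₀`, for `n ∈ Λ`, at `d_u = d_u^{n,n+1}` and `α = α(n, d_u^{n,n+1})`: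
`α = α(n+1, d_u^{n,n+1})`, `DET_n = DET_{n+1} = 0`, `TR_n < 0`, `TR_{n+1} < 0`,
and `λ = 0` is a simple root of both characteristic quadratics. -/
theorem stmt16
    (a b₁ b₂ c m₁ r₀ d_v ℓ β : ℝ)
    (ha : 0 < a) (hb₁ : 0 < b₁) (hb₂ : 0 < b₂) (hc0 : 0 < c) (hm₁ : 0 < m₁)
    (hr₀ : 0 < r₀) (hdv : 0 < d_v) (hℓ : 0 < ℓ) (hβ0 : 0 < β) (hβ1 : β < 1)
    (ϖ ustar vstar rlow rbar nhat : ℝ)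
    (hϖ : ϖ = m₁ * (c * b₁ - m₁) / (c ^ 2 * b₁ * b₂))
    (hustar : ustar = (1 / a) * (r₀ - (c * b₁ - m₁) * (1 - β) / (b₂ * c)))
    (hvstar : vstar = (c * b₁ - m₁) * (1 - β) * ustar / (b₂ * m₁))
    (hrlow : rlow = max ((c * b₁ - m₁) * (1 - β) / (b₂ * c))
        (((c * b₁ + m₁) * (1 - β) - c * b₂ * m₁) * (c * b₁ - m₁) / (c ^ 2 * b₁ * b₂)))
    (hrbar : rbar = (c * b₁ - m₁) * (c * b₁ + m₁) * (1 - β) / (c ^ 2 * b₁ * b₂))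
    (hnhat : nhat = ℓ * Real.sqrt (a * c * b₂ * ustar * ϖ / (d_v * ((1 - β) * ϖ - a * ustar))))
    (DET : ℕ → ℝ → ℝ → ℝ)
    (hDET : ∀ (n : ℕ) (du α : ℝ), DET n du α =
      ((n : ℝ) ^ 4 / ℓ ^ 4) * du * d_v +
        ((n : ℝ) ^ 2 / ℓ ^ 2) * (d_v * (a * ustar - (1 - β) * ϖ) + du * c * b₂ * ϖ
          + α * c * b₂ * vstar * ϖ) + a * c * b₂ * ustar * ϖ)
    (TR : ℕ → ℝ → ℝ)
    (hTR : ∀ (n : ℕ) (du : ℝ), TR n du =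
      -((n : ℝ) ^ 2 / ℓ ^ 2) * (du + d_v) - (a * ustar - (1 - β) * ϖ) - c * b₂ * ϖ)
    (αf : ℕ → ℝ → ℝ)
    (hαf : ∀ (n : ℕ) (du : ℝ), αf n du =
      -(((n : ℝ) ^ 4 / ℓ ^ 4) * du * d_v +
          ((n : ℝ) ^ 2 / ℓ ^ 2) * (d_v * (a * ustar - (1 - β) * ϖ) + du * c * b₂ * ϖ)
          + a * c * b₂ * ustar * ϖ)
        / (((n : ℝ) ^ 2 / ℓ ^ 2) * c * b₂ * vstar * ϖ))
    (dunn : ℕ → ℝ)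
    (hdunn : ∀ n : ℕ, dunn n =
      a * c * b₂ * ustar * ϖ * ℓ ^ 4 / (d_v * (n : ℝ) ^ 2 * ((n : ℝ) + 1) ^ 2))
    (hc : c > m₁ / b₁) (hr1 : rlow < r₀) (hr2 : r₀ < rbar)
    (n : ℕ) (hn : nhat < (n : ℝ))
    (du α : ℝ) (hdu : du = dunn n) (hα : α = αf n (dunn n)) :
    α = αf (n + 1) (dunn n) ∧
    DET n du α = 0 ∧ DET (n + 1) du α = 0 ∧
    TR n du < 0 ∧ TR (n + 1) du < 0 ∧
    deriv (fun lam : ℝ => lam ^ 2 - TR n du * lam + DET n du α) 0 ≠ 0 ∧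
    deriv (fun lam : ℝ => lam ^ 2 - TR (n + 1) du * lam + DET (n + 1) du α) 0 ≠ 0 :=
  stmt16_general a b₁ b₂ c m₁ r₀ d_v ℓ β ha hb₁ hb₂ hc0 hm₁ hdv hℓ hβ1 ϖ ustar vstar rlow nhat hϖ
    hustar hvstar hrlow hnhat DET hDET TR hTR αf hαf dunn hdunn hc hr1 n hn du α hdu hα
end

section
/- (Theorem 3.5(2)(b)(i), instability part) Assume c > m₁/b₁ and r₀ > r̲₀. Let d_u > 0 and suppose there exists n ∈ ℕ such that 0 < α < α(n, d_u). Then DET_n(d_u, α) < 0, and the quadratic λ² − TR_n(d_u)·λ + DET_n(d_u, α) = 0 has a real root λ > 0 (so the positive constant steady state is linearly unstable). -/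
/-!
`α ↦ DET_n(d_u, α)` is affine with slope `(n²/ℓ²) c b₂ v* ϖ`, and `α(n, d_u)` is its zero.
The conditions `c b₁ > m₁` and `r₀ > r̲₀` make `ϖ`, `u*` and `v*` positive, so the slope is
positive and `DET_n < 0` below the threshold. A monic quadratic with negative constant term
has roots of opposite signs, one of which is therefore a positive eigenvalue.
-/

theorem exists_pos_sq_sub_mul_add_eq_zero {T D : ℝ} (hD : D < 0) :
    ∃ x : ℝ, 0 < x ∧ x ^ 2 - T * x + D = 0 := by
  have hdisc : 0 ≤ T ^ 2 - 4 * D := by nlinarith [sq_nonneg T]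
  have habs : |T| < √(T ^ 2 - 4 * D) := by
    rw [Real.lt_sqrt (abs_nonneg T), sq_abs]
    linarith
  refine ⟨(T + √(T ^ 2 - 4 * D)) / 2, by linarith [neg_abs_le T], ?_⟩
  linear_combination Real.sq_sqrt hdisc / 4

theorem stmt17_general
    (a b₁ b₂ c m₁ r₀ d_v ℓ β : ℝ)
    (ha : 0 < a) (hb₁ : 0 < b₁) (hb₂ : 0 < b₂) (hc0 : 0 < c) (hm₁ : 0 < m₁)
    (hℓ : 0 < ℓ) (hβ1 : β < 1)
    (ϖ ustar vstar rlow : ℝ)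
    (hϖ : ϖ = m₁ * (c * b₁ - m₁) / (c ^ 2 * b₁ * b₂))
    (hustar : ustar = (1 / a) * (r₀ - (c * b₁ - m₁) * (1 - β) / (b₂ * c)))
    (hvstar : vstar = (c * b₁ - m₁) * (1 - β) * ustar / (b₂ * m₁))
    (hrlow : rlow = max ((c * b₁ - m₁) * (1 - β) / (b₂ * c))
        (((c * b₁ + m₁) * (1 - β) - c * b₂ * m₁) * (c * b₁ - m₁) / (c ^ 2 * b₁ * b₂)))
    (DET : ℕ → ℝ → ℝ → ℝ)
    (hDET : ∀ (n : ℕ) (du α : ℝ), DET n du α =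
      ((n : ℝ) ^ 4 / ℓ ^ 4) * du * d_v +
        ((n : ℝ) ^ 2 / ℓ ^ 2) * (d_v * (a * ustar - (1 - β) * ϖ) + du * c * b₂ * ϖ
          + α * c * b₂ * vstar * ϖ) + a * c * b₂ * ustar * ϖ)
    (TR : ℕ → ℝ → ℝ)
    (αf : ℕ → ℝ → ℝ)
    (hαf : ∀ (n : ℕ) (du : ℝ), αf n du =
      -(((n : ℝ) ^ 4 / ℓ ^ 4) * du * d_v +
          ((n : ℝ) ^ 2 / ℓ ^ 2) * (d_v * (a * ustar - (1 - β) * ϖ) + du * c * b₂ * ϖ)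
          + a * c * b₂ * ustar * ϖ)
        / (((n : ℝ) ^ 2 / ℓ ^ 2) * c * b₂ * vstar * ϖ))
    (hc : c > m₁ / b₁) (hr : r₀ > rlow)
    (du : ℝ) (n : ℕ) (hn : 0 < n)
    (α : ℝ) (hα : α < αf n du) :
    DET n du α < 0 ∧
      ∃ lam : ℝ, 0 < lam ∧ lam ^ 2 - TR n du * lam + DET n du α = 0 := by
  have hcb : 0 < c * b₁ - m₁ := by
    rw [gt_iff_lt, div_lt_iff₀ hb₁] at hc
    linarith
  have hϖ0 : 0 < ϖ := hϖ ▸ by positivity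
  have hu0 : 0 < ustar := by
    have hr' : (c * b₁ - m₁) * (1 - β) / (b₂ * c) < r₀ :=
      (le_max_left _ _).trans_lt (hrlow ▸ hr)
    rw [hustar]
    exact mul_pos (by positivity) (sub_pos.2 hr')
  have hv0 : 0 < vstar := by
    have := sub_pos.2 hβ1
    rw [hvstar]
    positivity
  have hslope : 0 < (n : ℝ) ^ 2 / ℓ ^ 2 * c * b₂ * vstar * ϖ := by
    have : (0 : ℝ) < n := by exact_mod_cast hn
    positivity
  have hDET_neg : DET n du α < 0 := by
    rw [hαf, lt_div_iff₀ hslope] at hα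
    rw [hDET]
    linear_combination hα
  exact ⟨hDET_neg, exists_pos_sq_sub_mul_add_eq_zero hDET_neg⟩

/-- Theorem 3.5(2)(b)(i), instability part: Under `c > m₁/b₁` and
`r₀ > r̲₀`, if for `d_u > 0` there is `n ∈ ℕ` with `0 < α < α(n, d_u)`, then
`DET_n(d_u, α) < 0` and the quadratic `λ² − TR_n(d_u)λ + DET_n(d_u, α) = 0`
has a positive real root. -/
theorem stmt17
    (a b₁ b₂ c m₁ r₀ d_v ℓ β : ℝ)
    (ha : 0 < a) (hb₁ : 0 < b₁) (hb₂ : 0 < b₂) (hc0 : 0 < c) (hm₁ : 0 < m₁)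
    (hr₀ : 0 < r₀) (hdv : 0 < d_v) (hℓ : 0 < ℓ) (hβ0 : 0 < β) (hβ1 : β < 1)
    (ϖ ustar vstar rlow : ℝ)
    (hϖ : ϖ = m₁ * (c * b₁ - m₁) / (c ^ 2 * b₁ * b₂))
    (hustar : ustar = (1 / a) * (r₀ - (c * b₁ - m₁) * (1 - β) / (b₂ * c)))
    (hvstar : vstar = (c * b₁ - m₁) * (1 - β) * ustar / (b₂ * m₁))
    (hrlow : rlow = max ((c * b₁ - m₁) * (1 - β) / (b₂ * c))
        (((c * b₁ + m₁) * (1 - β) - c * b₂ * m₁) * (c * b₁ - m₁) / (c ^ 2 * b₁ * b₂)))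
    (DET : ℕ → ℝ → ℝ → ℝ)
    (hDET : ∀ (n : ℕ) (du α : ℝ), DET n du α =
      ((n : ℝ) ^ 4 / ℓ ^ 4) * du * d_v +
        ((n : ℝ) ^ 2 / ℓ ^ 2) * (d_v * (a * ustar - (1 - β) * ϖ) + du * c * b₂ * ϖ
          + α * c * b₂ * vstar * ϖ) + a * c * b₂ * ustar * ϖ)
    (TR : ℕ → ℝ → ℝ)
    (hTR : ∀ (n : ℕ) (du : ℝ), TR n du =
      -((n : ℝ) ^ 2 / ℓ ^ 2) * (du + d_v) - (a * ustar - (1 - β) * ϖ) - c * b₂ * ϖ)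
    (αf : ℕ → ℝ → ℝ)
    (hαf : ∀ (n : ℕ) (du : ℝ), αf n du =
      -(((n : ℝ) ^ 4 / ℓ ^ 4) * du * d_v +
          ((n : ℝ) ^ 2 / ℓ ^ 2) * (d_v * (a * ustar - (1 - β) * ϖ) + du * c * b₂ * ϖ)
          + a * c * b₂ * ustar * ϖ)
        / (((n : ℝ) ^ 2 / ℓ ^ 2) * c * b₂ * vstar * ϖ))
    (hc : c > m₁ / b₁) (hr : r₀ > rlow)
    (du : ℝ) (hdu : 0 < du) (n : ℕ) (hn : 0 < n)
    (α : ℝ) (hα0 : 0 < α) (hα : α < αf n du) :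
    DET n du α < 0 ∧
      ∃ lam : ℝ, 0 < lam ∧ lam ^ 2 - TR n du * lam + DET n du α = 0 :=
  stmt17_general a b₁ b₂ c m₁ r₀ d_v ℓ β ha hb₁ hb₂ hc0 hm₁ hℓ hβ1 ϖ ustar vstar rlow hϖ hustar
    hvstar hrlow DET hDET TR αf hαf hc hr du n hn α hα
end

section
/- (Theorem 3.5(2)(a)) Assume c > m₁/b₁ and r̲₀ < r₀ < r̄₀. Let d_u > 0 satisfy d_u ≥ d_u^n for every n ∈ Λ. Then for every α > 0 and every n ∈ ℕ₀: DET_n(d_u, α) > 0 and TR_n(d_u) < 0; consequently every complex root λ of λ² − TR_n(d_u)·λ + DET_n(d_u, α) = 0 has strictly negative real part. -/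
theorem mul_sq_div_sq_le_of_le_mul_sqrt {A C ℓ y : ℝ} (hA : 0 < A) (hC : 0 ≤ C) (hℓ : 0 < ℓ)
    (hy : 0 ≤ y) (h : y ≤ ℓ * √(C / A)) : A * (y ^ 2 / ℓ ^ 2) ≤ C := by
  have hsq : y ^ 2 ≤ ℓ ^ 2 * (C / A) := by
    calc y ^ 2 ≤ (ℓ * √(C / A)) ^ 2 := pow_le_pow_left₀ hy h 2
      _ = ℓ ^ 2 * (C / A) := by rw [mul_pow, Real.sq_sqrt (by positivity)]
  rw [mul_div_assoc', div_le_iff₀ (by positivity)]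
  calc A * y ^ 2 ≤ A * (ℓ ^ 2 * (C / A)) := by gcongr
    _ = C * ℓ ^ 2 := by field_simp

theorem sub_le_mul_of_div_le_of_gt_mul_sqrt {dv K B C ℓ du y : ℝ} (hdv : 0 < dv) (hK : 0 < K)
    (hB : 0 ≤ B) (hC : 0 ≤ C) (hℓ : 0 < ℓ) (hdu : 0 ≤ du) (hy : 0 ≤ y)
    (h : ℓ * √(C / (dv * K)) < y →
      (dv * K * (y ^ 2 / ℓ ^ 2) - C) / (y ^ 2 / ℓ ^ 2 * (dv * (y ^ 2 / ℓ ^ 2) + B)) ≤ du) :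
    dv * K * (y ^ 2 / ℓ ^ 2) - C ≤ du * (y ^ 2 / ℓ ^ 2 * (dv * (y ^ 2 / ℓ ^ 2) + B)) := by
  by_cases hy' : ℓ * √(C / (dv * K)) < y
  · have hy0 : 0 < y := lt_of_le_of_lt (by positivity) hy'
    exact (div_le_iff₀ (by positivity)).1 (h hy')
  · have := mul_sq_div_sq_le_of_le_mul_sqrt (by positivity) hC hℓ hy (not_lt.1 hy')
    have : 0 ≤ du * (y ^ 2 / ℓ ^ 2 * (dv * (y ^ 2 / ℓ ^ 2) + B)) := by positivity
    linarith

theorem quadratic_pos_of_sub_le_mul {x du dv K B C E : ℝ} (hx : 0 ≤ x) (hC : 0 < C) (hE : 0 < E)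
    (h : dv * K * x - C ≤ du * (x * (dv * x + B))) :
    0 < x ^ 2 * du * dv + x * (dv * -K + du * B + E) + C := by
  rcases hx.eq_or_lt with rfl | hx
  · simpa using hC
  · nlinarith [mul_pos hx hE]

section Constants

variable {a b₁ b₂ c m₁ r₀ β ϖ ustar : ℝ}

theorem mul_ustar_eq (ha : a ≠ 0)
    (hustar : ustar = (1 / a) * (r₀ - (c * b₁ - m₁) * (1 - β) / (b₂ * c))) :
    a * ustar = r₀ - (c * b₁ - m₁) * (1 - β) / (b₂ * c) := by
  rw [hustar]
  field_simp

theorem one_sub_mul_varpi_sub_mul_ustar_eq (ha : a ≠ 0) (hb₁ : b₁ ≠ 0) (hb₂ : b₂ ≠ 0)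
    (hc : c ≠ 0) (hϖ : ϖ = m₁ * (c * b₁ - m₁) / (c ^ 2 * b₁ * b₂))
    (hustar : ustar = (1 / a) * (r₀ - (c * b₁ - m₁) * (1 - β) / (b₂ * c))) :
    (1 - β) * ϖ - a * ustar = (c * b₁ - m₁) * (c * b₁ + m₁) * (1 - β) / (c ^ 2 * b₁ * b₂) - r₀ := by
  rw [mul_ustar_eq ha hustar, hϖ]
  field_simp
  ring

theorem one_sub_mul_varpi_sub_mul_ustar_sub_eq (ha : a ≠ 0) (hb₁ : b₁ ≠ 0) (hb₂ : b₂ ≠ 0)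
    (hc : c ≠ 0) (hϖ : ϖ = m₁ * (c * b₁ - m₁) / (c ^ 2 * b₁ * b₂))
    (hustar : ustar = (1 / a) * (r₀ - (c * b₁ - m₁) * (1 - β) / (b₂ * c))) :
    (1 - β) * ϖ - a * ustar - c * b₂ * ϖ =
      ((c * b₁ + m₁) * (1 - β) - c * b₂ * m₁) * (c * b₁ - m₁) / (c ^ 2 * b₁ * b₂) - r₀ := by
  rw [mul_ustar_eq ha hustar, hϖ]
  field_simp
  ring

end Constants

theorem stmt18_general
    (a b₁ b₂ c m₁ r₀ d_v ℓ β : ℝ)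
    (ha : 0 < a) (hb₁ : 0 < b₁) (hb₂ : 0 < b₂) (hc0 : 0 < c) (hm₁ : 0 < m₁)
    (hdv : 0 < d_v) (hℓ : 0 < ℓ) (hβ1 : β < 1)
    (ϖ ustar vstar rlow rbar nhat : ℝ)
    (hϖ : ϖ = m₁ * (c * b₁ - m₁) / (c ^ 2 * b₁ * b₂))
    (hustar : ustar = (1 / a) * (r₀ - (c * b₁ - m₁) * (1 - β) / (b₂ * c)))
    (hvstar : vstar = (c * b₁ - m₁) * (1 - β) * ustar / (b₂ * m₁))
    (hrlow : rlow = max ((c * b₁ - m₁) * (1 - β) / (b₂ * c))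
        (((c * b₁ + m₁) * (1 - β) - c * b₂ * m₁) * (c * b₁ - m₁) / (c ^ 2 * b₁ * b₂)))
    (hrbar : rbar = (c * b₁ - m₁) * (c * b₁ + m₁) * (1 - β) / (c ^ 2 * b₁ * b₂))
    (hnhat : nhat = ℓ * Real.sqrt (a * c * b₂ * ustar * ϖ / (d_v * ((1 - β) * ϖ - a * ustar))))
    (DET : ℕ → ℝ → ℝ → ℝ)
    (hDET : ∀ (n : ℕ) (du α : ℝ), DET n du α =
      ((n : ℝ) ^ 4 / ℓ ^ 4) * du * d_v +
        ((n : ℝ) ^ 2 / ℓ ^ 2) * (d_v * (a * ustar - (1 - β) * ϖ) + du * c * b₂ * ϖ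
          + α * c * b₂ * vstar * ϖ) + a * c * b₂ * ustar * ϖ)
    (TR : ℕ → ℝ → ℝ)
    (hTR : ∀ (n : ℕ) (du : ℝ), TR n du =
      -((n : ℝ) ^ 2 / ℓ ^ 2) * (du + d_v) - (a * ustar - (1 - β) * ϖ) - c * b₂ * ϖ)
    (dun : ℕ → ℝ)
    (hdun : ∀ n : ℕ, dun n =
      -(d_v * (a * ustar - (1 - β) * ϖ) * ((n : ℝ) ^ 2 / ℓ ^ 2) + a * c * b₂ * ustar * ϖ)
        / (((n : ℝ) ^ 2 / ℓ ^ 2) * (d_v * (n : ℝ) ^ 2 / ℓ ^ 2 + c * b₂ * ϖ)))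
    (hc : c > m₁ / b₁) (hr1 : rlow < r₀) (hr2 : r₀ < rbar)
    (du : ℝ) (hdu : 0 < du)
    (hdun' : ∀ n : ℕ, nhat < (n : ℝ) → dun n ≤ du) :
    ∀ α : ℝ, 0 < α → ∀ n : ℕ,
      DET n du α > 0 ∧ TR n du < 0 ∧
        ∀ lam : ℂ, lam ^ 2 - (TR n du : ℂ) * lam + (DET n du α : ℂ) = 0 → lam.re < 0 := by
  have hcb : 0 < c * b₁ - m₁ := sub_pos.2 ((div_lt_iff₀ hb₁).1 hc)
  have hβ : 0 < 1 - β := sub_pos.2 hβ1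
  rw [hrlow, max_lt_iff] at hr1
  rw [hrbar] at hr2
  have hϖ0 : 0 < ϖ := hϖ ▸ by positivity
  have hau : 0 < a * ustar := by rw [mul_ustar_eq ha.ne' hustar]; linarith [hr1.1]
  have hu : 0 < ustar := pos_of_mul_pos_right hau ha.le
  have hv : 0 < vstar := hvstar ▸ by positivity
  have hK : 0 < (1 - β) * ϖ - a * ustar := by
    rw [one_sub_mul_varpi_sub_mul_ustar_eq ha.ne' hb₁.ne' hb₂.ne' hc0.ne' hϖ hustar]; linarith
  have hKB : (1 - β) * ϖ - a * ustar < c * b₂ * ϖ := by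
    have := one_sub_mul_varpi_sub_mul_ustar_sub_eq ha.ne' hb₁.ne' hb₂.ne' hc0.ne' hϖ hustar
    linarith [hr1.2]
  intro α hα n
  have hTRneg : TR n du < 0 := by
    have : 0 ≤ (n : ℝ) ^ 2 / ℓ ^ 2 * (du + d_v) := by positivity
    rw [hTR]; linarith
  have hthreshold := sub_le_mul_of_div_le_of_gt_mul_sqrt (B := c * b₂ * ϖ)
    (C := a * c * b₂ * ustar * ϖ) hdv hK (by positivity) (by positivity) hℓ hdu.le
    (Nat.cast_nonneg n) fun hn => by
      have := hdun' n (hnhat ▸ hn)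
      rw [hdun] at this
      convert this using 1
      ring
  have hDETpos : DET n du α > 0 := by
    have := quadratic_pos_of_sub_le_mul (E := α * c * b₂ * vstar * ϖ) (by positivity)
      (by positivity) (by positivity) hthreshold
    rw [hDET]
    convert this using 2
    ring
  exact ⟨hDETpos, hTRneg, fun _ => Complex.re_neg_of_sq_sub_mul_add_eq_zero hTRneg hDETpos⟩

/-- Theorem 3.5(2)(a): Under `c > m₁/b₁` and `r̲₀ < r₀ < r̄₀`, if
`d_u > 0` satisfies `d_u ≥ d_u^n` for every `n ∈ Λ`, then for every `α > 0` and
every `n ∈ ℕ₀`: `DET_n(d_u, α) > 0`, `TR_n(d_u) < 0`, and every complex root of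
`λ² − TR_n(d_u)λ + DET_n(d_u, α) = 0` has strictly negative real part. -/
theorem stmt18
    (a b₁ b₂ c m₁ r₀ d_v ℓ β : ℝ)
    (ha : 0 < a) (hb₁ : 0 < b₁) (hb₂ : 0 < b₂) (hc0 : 0 < c) (hm₁ : 0 < m₁)
    (hr₀ : 0 < r₀) (hdv : 0 < d_v) (hℓ : 0 < ℓ) (hβ0 : 0 < β) (hβ1 : β < 1)
    (ϖ ustar vstar rlow rbar nhat : ℝ)
    (hϖ : ϖ = m₁ * (c * b₁ - m₁) / (c ^ 2 * b₁ * b₂))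
    (hustar : ustar = (1 / a) * (r₀ - (c * b₁ - m₁) * (1 - β) / (b₂ * c)))
    (hvstar : vstar = (c * b₁ - m₁) * (1 - β) * ustar / (b₂ * m₁))
    (hrlow : rlow = max ((c * b₁ - m₁) * (1 - β) / (b₂ * c))
        (((c * b₁ + m₁) * (1 - β) - c * b₂ * m₁) * (c * b₁ - m₁) / (c ^ 2 * b₁ * b₂)))
    (hrbar : rbar = (c * b₁ - m₁) * (c * b₁ + m₁) * (1 - β) / (c ^ 2 * b₁ * b₂))
    (hnhat : nhat = ℓ * Real.sqrt (a * c * b₂ * ustar * ϖ / (d_v * ((1 - β) * ϖ - a * ustar))))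
    (DET : ℕ → ℝ → ℝ → ℝ)
    (hDET : ∀ (n : ℕ) (du α : ℝ), DET n du α =
      ((n : ℝ) ^ 4 / ℓ ^ 4) * du * d_v +
        ((n : ℝ) ^ 2 / ℓ ^ 2) * (d_v * (a * ustar - (1 - β) * ϖ) + du * c * b₂ * ϖ
          + α * c * b₂ * vstar * ϖ) + a * c * b₂ * ustar * ϖ)
    (TR : ℕ → ℝ → ℝ)
    (hTR : ∀ (n : ℕ) (du : ℝ), TR n du =
      -((n : ℝ) ^ 2 / ℓ ^ 2) * (du + d_v) - (a * ustar - (1 - β) * ϖ) - c * b₂ * ϖ)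
    (dun : ℕ → ℝ)
    (hdun : ∀ n : ℕ, dun n =
      -(d_v * (a * ustar - (1 - β) * ϖ) * ((n : ℝ) ^ 2 / ℓ ^ 2) + a * c * b₂ * ustar * ϖ)
        / (((n : ℝ) ^ 2 / ℓ ^ 2) * (d_v * (n : ℝ) ^ 2 / ℓ ^ 2 + c * b₂ * ϖ)))
    (hc : c > m₁ / b₁) (hr1 : rlow < r₀) (hr2 : r₀ < rbar)
    (du : ℝ) (hdu : 0 < du)
    (hdun' : ∀ n : ℕ, nhat < (n : ℝ) → dun n ≤ du) :
    ∀ α : ℝ, 0 < α → ∀ n : ℕ,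
      DET n du α > 0 ∧ TR n du < 0 ∧
        ∀ lam : ℂ, lam ^ 2 - (TR n du : ℂ) * lam + (DET n du α : ℂ) = 0 → lam.re < 0 :=
  stmt18_general a b₁ b₂ c m₁ r₀ d_v ℓ β ha hb₁ hb₂ hc0 hm₁ hdv hℓ hβ1 ϖ ustar vstar rlow rbar nhat
    hϖ hustar hvstar hrlow hrbar hnhat DET hDET TR hTR dun hdun hc hr1 hr2 du hdu hdun'
end
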